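/- arXiv:2604.08724 — 10 statements merged into one kernel-verified Lean document; each statement's English description precedes it below -/
import Mathlib

section
/- Let G be a group and A a nonempty subset of G. Then: (i) for every subset B of G such that the product AB is direct, |A|·|B| ≤ |G| as cardinals; (ii) for every right subfactor B of G relative to A, |G| ≤ |A⁻¹A|·|B|; (iii) every right subfactor B of G relative to A with 1 ∈ B satisfies B ⊆ (G ∖ A⁻¹A) ∪ {1}. Consequently |G:A|⁺·|A| ≤ |G| ≤ |G:A|⁻·|A⁻¹A| and |G:A|⁺ ≤ |G ∖ A⁻¹A| + 1. -/
/-!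
A direct product `A · B` embeds `A × B` into `G`, which gives the lower bound on `|G|`.
If `B` is maximal, every `g ∉ (A⁻¹A)B` could be added to `B` keeping `AB` direct, so
`(A⁻¹A)B = G`, which gives the upper bound. Directness says `b b₀⁻¹ ∉ A⁻¹A` for distinct
`b, b₀ ∈ B`, so right translation by `b₀⁻¹` injects `B` into `(G ∖ A⁻¹A) ∪ {1}`.
Right subfactors exist by Zorn's lemma, and the bounds pass to the subindices because
multiplication by a fixed cardinal commutes with suprema.
-/

open Pointwise

/-- The product `A * B` is direct: every element of `A * B` has a unique
representation `a * b` with `a ∈ A`, `b ∈ B`. -/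
def IsDirectProd {G : Type*} [Group G] (A B : Set G) : Prop :=
  ∀ a₁ ∈ A, ∀ b₁ ∈ B, ∀ a₂ ∈ A, ∀ b₂ ∈ B, a₁ * b₁ = a₂ * b₂ → a₁ = a₂ ∧ b₁ = b₂

/-- `B` is a right subfactor of `G` relative to `A`: `B` is inclusion-maximal
among subsets whose product with `A` (on the right) is direct. -/
def IsRightSubfactor {G : Type*} [Group G] (A B : Set G) : Prop :=
  IsDirectProd A B ∧ ∀ B' : Set G, B ⊆ B' → IsDirectProd A B' → B' = B

/-- The right upper subindex `|G:A|⁺`. -/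
noncomputable def rUpperIndex {G : Type*} [Group G] (A : Set G) : Cardinal :=
  sSup {c | ∃ B : Set G, IsRightSubfactor A B ∧ c = Cardinal.mk ↥B}

/-- The right lower subindex `|G:A|⁻`. -/
noncomputable def rLowerIndex {G : Type*} [Group G] (A : Set G) : Cardinal :=
  sInf {c | ∃ B : Set G, IsRightSubfactor A B ∧ c = Cardinal.mk ↥B}

open Cardinal

namespace IsDirectProd

variable {G : Type*} [Group G] {A B : Set G}

theorem mk_mul_mk_le (hd : IsDirectProd A B) : #A * #B ≤ #G := by
  have hinj : Function.Injective (fun p : A × B => (p.1 : G) * p.2) := by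
    rintro ⟨⟨a₁, ha₁⟩, ⟨b₁, hb₁⟩⟩ ⟨⟨a₂, ha₂⟩, ⟨b₂, hb₂⟩⟩ heq
    obtain ⟨rfl, rfl⟩ := hd a₁ ha₁ b₁ hb₁ a₂ ha₂ b₂ hb₂ heq
    rfl
  simpa [mk_prod] using mk_le_of_injective hinj

theorem eq_of_mul_inv_mem (hd : IsDirectProd A B) {b b₀ : G} (hb : b ∈ B) (hb₀ : b₀ ∈ B)
    (h : b * b₀⁻¹ ∈ A⁻¹ * A) : b = b₀ := by
  obtain ⟨x, hx, y, hy, hxy⟩ := h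
  have heq : y * b₀ = x⁻¹ * b := by
    rw [← inv_mul_eq_iff_eq_mul.mpr hxy.symm]
    group
  exact (hd y hy b₀ hb₀ x⁻¹ (Set.mem_inv.mp hx) b hb heq).2.symm

theorem insert_of_notMem (hd : IsDirectProd A B) {g : G} (hg : g ∉ A⁻¹ * A * B) :
    IsDirectProd A (insert g B) := by
  have hne : ∀ a₁ ∈ A, ∀ b ∈ B, ∀ a₂ ∈ A, a₁ * b ≠ a₂ * g := by
    intro a₁ ha₁ b hb a₂ ha₂ heq
    refine hg ⟨a₂⁻¹ * a₁, Set.mul_mem_mul (Set.inv_mem_inv.mpr ha₂) ha₁, b, hb, ?_⟩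
    simp only [mul_assoc, heq, inv_mul_cancel_left]
  rintro a₁ ha₁ b₁ (rfl | hb₁) a₂ ha₂ b₂ (rfl | hb₂) heq
  · exact ⟨mul_right_cancel heq, rfl⟩
  · exact absurd heq.symm (hne a₂ ha₂ b₂ hb₂ a₁ ha₁)
  · exact absurd heq (hne a₁ ha₁ b₁ hb₁ a₂ ha₂)
  · exact hd a₁ ha₁ b₁ hb₁ a₂ ha₂ b₂ hb₂ heq

theorem mul_inv_mem_compl_union_one (hd : IsDirectProd A B) {b b₀ : G} (hb : b ∈ B)
    (hb₀ : b₀ ∈ B) : b * b₀⁻¹ ∈ (A⁻¹ * A)ᶜ ∪ {1} := by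
  by_cases hmem : b * b₀⁻¹ ∈ A⁻¹ * A
  · simp [hd.eq_of_mul_inv_mem hb hb₀ hmem]
  · exact Or.inl hmem

theorem mk_le_mk_compl_add_one (hd : IsDirectProd A B) : #B ≤ #((A⁻¹ * A)ᶜ : Set G) + 1 := by
  obtain rfl | ⟨b₀, hb₀⟩ := B.eq_empty_or_nonempty
  · simp
  have hsub : (· * b₀⁻¹) '' B ⊆ (A⁻¹ * A)ᶜ ∪ {1} := by
    rintro _ ⟨b, hb, rfl⟩
    exact hd.mul_inv_mem_compl_union_one hb hb₀
  calc #B = #((· * b₀⁻¹) '' B) := (mk_image_eq (mul_left_injective b₀⁻¹)).symm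
    _ ≤ #((A⁻¹ * A)ᶜ ∪ {1} : Set G) := mk_le_mk_of_subset hsub
    _ ≤ #((A⁻¹ * A)ᶜ : Set G) + 1 := by simpa using mk_union_le (A⁻¹ * A)ᶜ {(1 : G)}

end IsDirectProd

namespace IsRightSubfactor

variable {G : Type*} [Group G] {A B : Set G}

theorem inv_mul_mul_eq_univ (hA : A.Nonempty) (h : IsRightSubfactor A B) :
    A⁻¹ * A * B = Set.univ := by
  refine Set.eq_univ_of_forall fun g => by_contra fun hg => ?_
  have hgB : g ∈ B :=
    h.2 _ (Set.subset_insert g B) (h.1.insert_of_notMem hg) ▸ Set.mem_insert g B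
  obtain ⟨a, ha⟩ := hA
  exact hg ⟨1, ⟨a⁻¹, Set.inv_mem_inv.mpr ha, a, ha, inv_mul_cancel a⟩, g, hgB, one_mul g⟩

theorem mk_le_mk_mul_mk (hA : A.Nonempty) (h : IsRightSubfactor A B) :
    #G ≤ #(A⁻¹ * A : Set G) * #B := by
  rw [← mk_univ, ← h.inv_mul_mul_eq_univ hA]
  exact mk_mul_le

end IsRightSubfactor

theorem exists_isRightSubfactor {G : Type*} [Group G] (A : Set G) :
    ∃ B : Set G, IsRightSubfactor A B := by
  obtain ⟨B, hB⟩ := zorn_subset {B : Set G | IsDirectProd A B} fun c hc hchain => by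
    refine ⟨⋃₀ c, ?_, fun s hs => Set.subset_sUnion_of_mem hs⟩
    rintro a₁ ha₁ b₁ ⟨S₁, hS₁, hb₁⟩ a₂ ha₂ b₂ ⟨S₂, hS₂, hb₂⟩ heq
    rcases hchain.total hS₁ hS₂ with hsub | hsub
    · exact hc hS₂ a₁ ha₁ b₁ (hsub hb₁) a₂ ha₂ b₂ hb₂ heq
    · exact hc hS₁ a₁ ha₁ b₁ hb₁ a₂ ha₂ b₂ (hsub hb₂) heq
  exact ⟨B, hB.prop, fun B' hsub hdir => hB.eq_of_ge hdir hsub⟩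

theorem stmt0 {G : Type*} [Group G] (A : Set G) (hA : A.Nonempty) :
    (∀ B : Set G, IsDirectProd A B → Cardinal.mk ↥A * Cardinal.mk ↥B ≤ Cardinal.mk G) ∧
    (∀ B : Set G, IsRightSubfactor A B →
      Cardinal.mk G ≤ Cardinal.mk ↥(A⁻¹ * A) * Cardinal.mk ↥B) ∧
    (∀ B : Set G, IsRightSubfactor A B → (1 : G) ∈ B → B ⊆ (A⁻¹ * A)ᶜ ∪ {1}) ∧
    rUpperIndex A * Cardinal.mk ↥A ≤ Cardinal.mk G ∧
    Cardinal.mk G ≤ rLowerIndex A * Cardinal.mk ↥(A⁻¹ * A) ∧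
    rUpperIndex A ≤ Cardinal.mk ↥((A⁻¹ * A)ᶜ) + 1 := by
  refine ⟨fun B hB => hB.mk_mul_mk_le, fun B hB => hB.mk_le_mk_mul_mk hA, ?_, ?_, ?_, ?_⟩
  · intro B hB h1 b hb
    simpa using hB.1.mul_inv_mem_compl_union_one hb h1
  · rw [rUpperIndex, sSup_eq_iSup', Cardinal.ciSup_mul]
    refine ciSup_le' ?_
    rintro ⟨_, B, hB, rfl⟩
    rw [mul_comm]
    exact hB.1.mk_mul_mk_le
  · obtain ⟨B₀, hB₀⟩ := exists_isRightSubfactor A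
    obtain ⟨B, hB, hBc⟩ : rLowerIndex A ∈ _ := csInf_mem ⟨_, B₀, hB₀, rfl⟩
    rw [hBc, mul_comm]
    exact hB.mk_le_mk_mul_mk hA
  · refine csSup_le' ?_
    rintro _ ⟨B, hB, rfl⟩
    exact hB.1.mk_le_mk_compl_add_one
end

section
/- Let G be a group, A a nonempty subset of G, C(A) = G ∖ A⁻¹A and C¹(A) = C(A) ∪ {1}. The following are equivalent: (a) C¹(A) is a subgroup of G; (b) C¹(A) is a right subfactor of G relative to A; (c) C(A)C(A) ⊆ C¹(A); (d) the set of right subfactors of G relative to A containing 1 equals {C¹(A)}; (e) the set of right subfactors of G relative to A containing 1 is a singleton; (f) the product A·C¹(A) is direct. Moreover, each of these conditions implies |G:A|⁺ = |C(A)| + 1, and if A⁻¹A is cofinite in G then the equality |G:A|⁺ = |C(A)| + 1 is equivalent to them. -/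
open Pointwise

/-- `C(A) = G ∖ A⁻¹A`. -/
def Cset {G : Type*} [Group G] (A : Set G) : Set G := (A⁻¹ * A)ᶜ

/-- `C¹(A) = C(A) ∪ {1}`. -/
def Cset1 {G : Type*} [Group G] (A : Set G) : Set G := Cset A ∪ {1}

/-!
Write `D = A⁻¹A`. The product `AB` is direct iff `b₁b₂⁻¹ ∉ D` for distinct `b₁, b₂ ∈ B`, i.e. iff
`b₁b₂⁻¹ ∈ C¹(A)` for all `b₁, b₂ ∈ B`. Hence every `B` with `AB` direct and `1 ∈ B` lies in `C¹(A)`,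
and every right translate `Bb₀⁻¹` (`b₀ ∈ B`) is such a set, so `|B| ≤ |C¹(A)|`. Condition (f) now
says exactly that `C¹(A)` is closed under `(x, y) ↦ xy⁻¹`, which is (a) and, as `C(A)` is
closed under inversion, (c); when it holds `C¹(A)` is the largest direct factor and so the unique
right subfactor through `1`. Conversely, if the subfactors through `1` are unique, extending
`{1, c}` for each `c ∈ C(A)` shows that the unique one contains `C¹(A)`. When `C(A)` is finite the
supremum `|C(A)| + 1` is a successor cardinal, hence attained by some `B`, and then `Bb₀⁻¹ = C¹(A)`.
-/

open Cardinal

section DirectProduct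

variable {G : Type*} [Group G] {A B : Set G}

lemma mem_Cset1_iff {g : G} : g ∈ Cset1 A ↔ (g ∈ A⁻¹ * A → g = 1) := by
  simp only [Cset1, Cset, Set.mem_union, Set.mem_compl_iff, Set.mem_singleton_iff]
  tauto

lemma one_mem_Cset1 : (1 : G) ∈ Cset1 A := Or.inr rfl

lemma inv_mem_inv_mul_self {g : G} (hg : g ∈ A⁻¹ * A) : g⁻¹ ∈ A⁻¹ * A := by
  obtain ⟨x, hx, y, hy, rfl⟩ := hg
  exact ⟨y⁻¹, Set.inv_mem_inv.mpr hy, x⁻¹, hx, (mul_inv_rev x y).symm⟩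

lemma inv_mem_Cset {g : G} (hg : g ∈ Cset A) : g⁻¹ ∈ Cset A :=
  fun h ↦ hg (inv_inv g ▸ inv_mem_inv_mul_self h)

lemma one_notMem_Cset (hA : A.Nonempty) : (1 : G) ∉ Cset A := by
  obtain ⟨a, ha⟩ := hA
  exact not_not.mpr ⟨a⁻¹, Set.inv_mem_inv.mpr ha, a, ha, inv_mul_cancel a⟩

lemma mk_Cset1 (hA : A.Nonempty) : #(Cset1 A) = #(Cset A) + 1 := by
  rw [Cset1, Set.union_singleton, mk_insert (one_notMem_Cset hA)]

lemma isDirectProd_iff : IsDirectProd A B ↔ ∀ b₁ ∈ B, ∀ b₂ ∈ B, b₁ * b₂⁻¹ ∈ Cset1 A := by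
  simp only [mem_Cset1_iff, mul_inv_eq_one]
  constructor
  · rintro h b₁ hb₁ b₂ hb₂ ⟨x, hx, a, ha, hxa⟩
    refine (h x⁻¹ hx b₁ hb₁ a ha b₂ hb₂ ?_).2
    rw [inv_mul_eq_iff_eq_mul, ← mul_assoc, show x * a = b₁ * b₂⁻¹ from hxa, inv_mul_cancel_right]
  · intro h a₁ ha₁ b₁ hb₁ a₂ ha₂ b₂ hb₂ heq
    have hquot : b₁ * b₂⁻¹ = a₁⁻¹ * a₂ := by
      rw [mul_inv_eq_iff_eq_mul, mul_assoc, ← heq, inv_mul_cancel_left]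
    obtain rfl : b₁ = b₂ :=
      h b₁ hb₁ b₂ hb₂ (hquot ▸ Set.mul_mem_mul (Set.inv_mem_inv.mpr ha₁) ha₂)
    exact ⟨mul_right_cancel heq, rfl⟩

lemma IsDirectProd.subset_Cset1 (hd : IsDirectProd A B) (h1 : (1 : G) ∈ B) : B ⊆ Cset1 A :=
  fun b hb ↦ by simpa using isDirectProd_iff.mp hd b hb 1 h1

lemma IsDirectProd.image_mul_right (hd : IsDirectProd A B) (g : G) :
    IsDirectProd A ((· * g) '' B) := by
  rw [isDirectProd_iff] at hd ⊢
  rintro _ ⟨b₁, hb₁, rfl⟩ _ ⟨b₂, hb₂, rfl⟩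
  simpa [mul_assoc] using hd b₁ hb₁ b₂ hb₂

lemma IsDirectProd.image_mul_inv_subset_Cset1 (hd : IsDirectProd A B) {b₀ : G} (hb₀ : b₀ ∈ B) :
    (· * b₀⁻¹) '' B ⊆ Cset1 A :=
  (hd.image_mul_right b₀⁻¹).subset_Cset1 ⟨b₀, hb₀, mul_inv_cancel b₀⟩

lemma IsDirectProd.mk_le_mk_Cset1 (hd : IsDirectProd A B) : #B ≤ #(Cset1 A) := by
  obtain rfl | ⟨b₀, hb₀⟩ := B.eq_empty_or_nonempty
  · simp
  · rw [← mk_image_eq (mul_left_injective b₀⁻¹)]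
    exact mk_le_mk_of_subset (hd.image_mul_inv_subset_Cset1 hb₀)

lemma IsDirectProd.isDirectProd_Cset1_of_mk_eq (hfin : (Cset1 A).Finite) (hd : IsDirectProd A B)
    (hcard : #B = #(Cset1 A)) : IsDirectProd A (Cset1 A) := by
  obtain ⟨b₀, hb₀⟩ : B.Nonempty := by
    rw [← Set.nonempty_coe_sort, ← mk_ne_zero_iff, hcard, mk_ne_zero_iff]
    exact ⟨⟨1, one_mem_Cset1⟩⟩
  rw [← mk_image_eq (mul_left_injective b₀⁻¹)] at hcard
  have himage : (· * b₀⁻¹) '' B = Cset1 A :=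
    hfin.eq_of_subset_of_card_le (hd.image_mul_inv_subset_Cset1 hb₀)
      (Nat.card_congr (Cardinal.eq.mp hcard).some).ge
  exact himage ▸ hd.image_mul_right b₀⁻¹

lemma isDirectProd_pair {c : G} (hc : c ∈ Cset A) : IsDirectProd A {1, c} := by
  rw [isDirectProd_iff]
  have hc' : c ∈ Cset1 A := Or.inl hc
  have hc_inv : c⁻¹ ∈ Cset1 A := Or.inl (inv_mem_Cset hc)
  rintro _ (rfl | rfl) _ (rfl | rfl) <;> simp [one_mem_Cset1, hc', hc_inv]

lemma IsDirectProd.exists_isRightSubfactor_superset (hd : IsDirectProd A B) :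
    ∃ M, B ⊆ M ∧ IsRightSubfactor A M := by
  obtain ⟨M, hBM, hmax⟩ := zorn_subset_nonempty {B' : Set G | IsDirectProd A B'}
    (fun c hc hchain _ ↦ by
      refine ⟨⋃₀ c, ?_, fun s hs ↦ Set.subset_sUnion_of_mem hs⟩
      simp only [Set.mem_ofPred_eq, isDirectProd_iff] at hc ⊢
      rintro b₁ ⟨s₁, hs₁, hb₁⟩ b₂ ⟨s₂, hs₂, hb₂⟩
      rcases hchain.total hs₁ hs₂ with h | h
      · exact hc hs₂ b₁ (h hb₁) b₂ hb₂
      · exact hc hs₁ b₁ hb₁ b₂ (h hb₂)) B hd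
  exact ⟨M, hBM, hmax.1, fun B' hMB' hd' ↦ (hmax.2 hd' hMB').antisymm hMB'⟩

end DirectProduct

section Characterizations

variable {G : Type*} [Group G] {A : Set G}

lemma exists_subgroup_coe_eq_iff (S : Set G) :
    (∃ H : Subgroup G, (H : Set G) = S) ↔ S.Nonempty ∧ ∀ x ∈ S, ∀ y ∈ S, x * y⁻¹ ∈ S := by
  constructor
  · rintro ⟨H, rfl⟩
    exact ⟨OneMemClass.coe_nonempty H, fun x hx y hy ↦ H.mul_mem hx (H.inv_mem hy)⟩
  · rintro ⟨hne, hdiv⟩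
    exact ⟨Subgroup.ofDiv S hne hdiv, rfl⟩

lemma exists_subgroup_eq_Cset1_iff :
    (∃ H : Subgroup G, (H : Set G) = Cset1 A) ↔ IsDirectProd A (Cset1 A) := by
  rw [exists_subgroup_coe_eq_iff, isDirectProd_iff]
  exact and_iff_right ⟨1, one_mem_Cset1⟩

lemma mul_Cset_subset_Cset1_iff :
    Cset A * Cset A ⊆ Cset1 A ↔ IsDirectProd A (Cset1 A) := by
  rw [isDirectProd_iff]
  constructor
  · rintro hCC x (hx | rfl) y (hy | rfl)
    · exact hCC (Set.mul_mem_mul hx (inv_mem_Cset hy))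
    · rw [inv_one, mul_one]
      exact Or.inl hx
    · rw [one_mul]
      exact Or.inl (inv_mem_Cset hy)
    · rw [mul_inv_cancel]
      exact one_mem_Cset1
  · rintro hd _ ⟨x, hx, y, hy, rfl⟩
    simpa using hd x (Or.inl hx) y⁻¹ (Or.inl (inv_mem_Cset hy))

lemma isRightSubfactor_Cset1_iff : IsRightSubfactor A (Cset1 A) ↔ IsDirectProd A (Cset1 A) :=
  ⟨And.left, fun hd ↦ ⟨hd, fun _ hsub hd' ↦ (hd'.subset_Cset1 (hsub one_mem_Cset1)).antisymm hsub⟩⟩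

lemma setOf_isRightSubfactor_one_mem_eq_singleton_iff :
    {B : Set G | IsRightSubfactor A B ∧ (1 : G) ∈ B} = {Cset1 A} ↔ IsDirectProd A (Cset1 A) := by
  refine ⟨fun h ↦ ?_, fun hd ↦ ?_⟩
  · have hmem : Cset1 A ∈ {B : Set G | IsRightSubfactor A B ∧ (1 : G) ∈ B} := h ▸ rfl
    exact hmem.1.1
  · ext B
    refine ⟨fun ⟨hB, h1⟩ ↦ (hB.2 _ (hB.1.subset_Cset1 h1) hd).symm, ?_⟩
    rintro rfl
    exact ⟨isRightSubfactor_Cset1_iff.mpr hd, one_mem_Cset1⟩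

lemma exists_setOf_isRightSubfactor_one_mem_eq_singleton_iff :
    (∃ B₀ : Set G, {B : Set G | IsRightSubfactor A B ∧ (1 : G) ∈ B} = {B₀}) ↔
      IsDirectProd A (Cset1 A) := by
  refine ⟨?_, fun hd ↦ ⟨Cset1 A, setOf_isRightSubfactor_one_mem_eq_singleton_iff.mpr hd⟩⟩
  rintro ⟨B₀, hB₀⟩
  have hmem {B : Set G} : IsRightSubfactor A B ∧ (1 : G) ∈ B ↔ B = B₀ := Set.ext_iff.mp hB₀ B
  obtain ⟨hB₀sf, h1⟩ := hmem.mpr rfl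
  have hsuper : Cset1 A ⊆ B₀ := by
    rintro c (hc | rfl)
    · obtain ⟨M, hM, hMsf⟩ := (isDirectProd_pair hc).exists_isRightSubfactor_superset
      exact hmem.mp ⟨hMsf, hM (Or.inl rfl)⟩ ▸ hM (Or.inr rfl)
    · exact h1
  exact (hB₀sf.1.subset_Cset1 h1).antisymm hsuper ▸ hB₀sf.1

lemma rUpperIndex_eq_of_isDirectProd (hA : A.Nonempty) (hd : IsDirectProd A (Cset1 A)) :
    rUpperIndex A = #(Cset A) + 1 := by
  have hgreatest : IsGreatest {c | ∃ B : Set G, IsRightSubfactor A B ∧ c = #B} #(Cset1 A) :=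
    ⟨⟨_, isRightSubfactor_Cset1_iff.mpr hd, rfl⟩, by
      rintro _ ⟨B, hB, rfl⟩
      exact hB.1.mk_le_mk_Cset1⟩
  rw [rUpperIndex, hgreatest.csSup_eq, mk_Cset1 hA]

lemma isDirectProd_Cset1_of_rUpperIndex_eq (hA : A.Nonempty) (hfin : (Cset A).Finite)
    (h : rUpperIndex A = #(Cset A) + 1) : IsDirectProd A (Cset1 A) := by
  obtain ⟨n, hn⟩ := lt_aleph0.mp hfin.lt_aleph0
  have hsucc : rUpperIndex A = Order.succ (n : Cardinal) := by rw [h, hn, succ_natCast]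
  obtain ⟨B, hB, hcard⟩ := csSup_mem_of_not_isSuccPrelimit
    (s := {c | ∃ B : Set G, IsRightSubfactor A B ∧ c = #B})
    (show ¬Order.IsSuccPrelimit (rUpperIndex A) from hsucc ▸ Order.not_isSuccPrelimit_succ _)
  refine hB.1.isDirectProd_Cset1_of_mk_eq (hfin.union (Set.finite_singleton 1)) ?_
  rw [← hcard, mk_Cset1 hA]
  exact h

end Characterizations

theorem stmt1 {G : Type*} [Group G] (A : Set G) (hA : A.Nonempty) :
    ((∃ H : Subgroup G, (H : Set G) = Cset1 A) ↔ IsRightSubfactor A (Cset1 A)) ∧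
    ((∃ H : Subgroup G, (H : Set G) = Cset1 A) ↔ Cset A * Cset A ⊆ Cset1 A) ∧
    ((∃ H : Subgroup G, (H : Set G) = Cset1 A) ↔
      {B : Set G | IsRightSubfactor A B ∧ (1 : G) ∈ B} = {Cset1 A}) ∧
    ((∃ H : Subgroup G, (H : Set G) = Cset1 A) ↔
      ∃ B₀ : Set G, {B : Set G | IsRightSubfactor A B ∧ (1 : G) ∈ B} = {B₀}) ∧
    ((∃ H : Subgroup G, (H : Set G) = Cset1 A) ↔ IsDirectProd A (Cset1 A)) ∧
    ((∃ H : Subgroup G, (H : Set G) = Cset1 A) →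
      rUpperIndex A = Cardinal.mk ↥(Cset A) + 1) ∧
    ((Cset A).Finite →
      (rUpperIndex A = Cardinal.mk ↥(Cset A) + 1 ↔ ∃ H : Subgroup G, (H : Set G) = Cset1 A)) := by
  rw [exists_subgroup_eq_Cset1_iff, isRightSubfactor_Cset1_iff, mul_Cset_subset_Cset1_iff,
    setOf_isRightSubfactor_one_mem_eq_singleton_iff,
    exists_setOf_isRightSubfactor_one_mem_eq_singleton_iff]
  exact ⟨.rfl, .rfl, .rfl, .rfl, .rfl, rUpperIndex_eq_of_isDirectProd hA,
    fun hfin ↦ ⟨isDirectProd_Cset1_of_rUpperIndex_eq hA hfin, rUpperIndex_eq_of_isDirectProd hA⟩⟩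
end

section
/- Let G be a group, H a subgroup of G, and H^c = G ∖ H its set-theoretic complement. Then the setwise product H^c H^c equals ∅ if H = G, equals H if the index [G:H] = 2, and equals G if [G:H] > 2. Consequently H^c is index stable in G, with |G:H^c| = |G| if H = G, |G:H^c| = 2 if [G:H] = 2, and |G:H^c| = 1 if [G:H] > 2. -/
open Pointwise

/-- `B` is a left subfactor of `G` relative to `A`. -/
def IsLeftSubfactor {G : Type*} [Group G] (A B : Set G) : Prop :=
  IsDirectProd B A ∧ ∀ B' : Set G, B ⊆ B' → IsDirectProd B' A → B' = B

/-- The left upper subindex `|G:A|₊`. -/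
noncomputable def lUpperIndex {G : Type*} [Group G] (A : Set G) : Cardinal :=
  sSup {c | ∃ B : Set G, IsLeftSubfactor A B ∧ c = Cardinal.mk ↥B}

/-- The left lower subindex `|G:A|₋`. -/
noncomputable def lLowerIndex {G : Type*} [Group G] (A : Set G) : Cardinal :=
  sInf {c | ∃ B : Set G, IsLeftSubfactor A B ∧ c = Cardinal.mk ↥B}

/-- `A` is index stable in `G` with index `κ`: all four subindices equal `κ`. -/
def IsIndexStableWith {G : Type*} [Group G] (A : Set G) (κ : Cardinal) : Prop :=
  rUpperIndex A = κ ∧ rLowerIndex A = κ ∧ lUpperIndex A = κ ∧ lLowerIndex A = κ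

/-! Directness of `A * B` depends only on `A⁻¹ * A`: it says that `b₁ * b₂⁻¹ ∈ A⁻¹ * A` forces
`b₁ = b₂`. For `A = Hᶜ` we have `A⁻¹ = A`, so left subfactors are the inverses of right ones, and
`g ∈ Hᶜ * Hᶜ` iff some left coset of `H` differs from both `H` and `g H`. Hence `A⁻¹ * A` is `∅`, `H`
or `G` according as the index is `1`, `2` or larger, and the right subfactors are accordingly `G`
alone, the right transversals of `H` (which have `|G : H|` elements), or the singletons. -/

open Set
open scoped Cardinal

universe u

theorem Cardinal.exists_ne_ne_iff_of_mk_eq_two {α : Type*} (h : #α = 2) (x y : α) :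
    (∃ z, z ≠ x ∧ z ≠ y) ↔ x = y := by
  obtain ⟨w, hw, huniq⟩ := (Cardinal.mk_eq_two_iff' x).1 h
  constructor
  · rintro ⟨z, hzx, hzy⟩
    by_contra hxy
    exact hzy ((huniq z hzx).trans (huniq y (Ne.symm hxy)).symm)
  · rintro rfl
    exact ⟨w, hw, hw⟩

section Transversal

variable {α β : Type*} {f : α → β} {B : Set α}

theorem Set.InjOn.surjOn_univ_of_maximal (hf : f.Surjective) (hB : InjOn f B)
    (hmax : ∀ B', B ⊆ B' → InjOn f B' → B' = B) : SurjOn f B univ := by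
  intro y _
  by_contra hy
  obtain ⟨x, rfl⟩ := hf y
  have hxB : x ∈ B := by
    rw [← hmax (insert x B) (subset_insert x B)
      ((injOn_insert fun hx => hy ⟨x, hx, rfl⟩).2 ⟨hB, hy⟩)]
    exact mem_insert x B
  exact hy ⟨x, hxB, rfl⟩

theorem Function.Surjective.exists_maximal_injOn (hf : f.Surjective) :
    ∃ B : Set α, InjOn f B ∧ ∀ B', B ⊆ B' → InjOn f B' → B' = B := by
  set g := Function.surjInv hf
  have hgf : LeftInvOn g f (range g) := by
    rintro _ ⟨y, rfl⟩
    rw [Function.surjInv_eq hf]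
  refine ⟨range g, hgf.injOn, fun B' hsub hB' => subset_antisymm (fun x hx => ?_) hsub⟩
  rw [← hB' (hsub (mem_range_self _)) hx (Function.surjInv_eq hf (f x))]
  exact mem_range_self _

theorem Cardinal.mk_eq_of_maximal_injOn {α β : Type u} {f : α → β} {B : Set α}
    (hf : f.Surjective) (hB : InjOn f B) (hmax : ∀ B', B ⊆ B' → InjOn f B' → B' = B) :
    #B = #β := by
  rw [← Cardinal.mk_image_eq_of_injOn f B hB,
    (hB.surjOn_univ_of_maximal hf hmax).image_eq_of_mapsTo (mapsTo_univ f B), Cardinal.mk_univ]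

end Transversal

section Subfactors

variable {G : Type*} [Group G] {A B : Set G}

theorem isDirectProd_iff_mul_inv_mem :
    IsDirectProd A B ↔ ∀ b₁ ∈ B, ∀ b₂ ∈ B, b₁ * b₂⁻¹ ∈ A⁻¹ * A → b₁ = b₂ := by
  constructor
  · rintro hd b₁ hb₁ b₂ hb₂ ⟨x, hx, y, hy, hxy⟩
    refine (hd y hy b₂ hb₂ x⁻¹ hx b₁ hb₁ ?_).2.symm
    rw [eq_inv_mul_iff_mul_eq, ← mul_assoc, show x * y = _ from hxy, inv_mul_cancel_right]
  · intro h a₁ ha₁ b₁ hb₁ a₂ ha₂ b₂ hb₂ heq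
    obtain rfl : b₂ = b₁ := h b₂ hb₂ b₁ hb₁ ⟨a₂⁻¹, inv_mem_inv.2 ha₂, a₁, ha₁, by
      rw [inv_mul_eq_iff_eq_mul, ← mul_assoc, ← heq, mul_inv_cancel_right]⟩
    exact ⟨mul_right_cancel heq, rfl⟩

theorem isDirectProd_inv_inv : IsDirectProd A⁻¹ B⁻¹ ↔ IsDirectProd B A := by
  constructor
  · intro hd b₁ hb₁ a₁ ha₁ b₂ hb₂ a₂ ha₂ heq
    have := hd a₁⁻¹ (inv_mem_inv.2 ha₁) b₁⁻¹ (inv_mem_inv.2 hb₁) a₂⁻¹ (inv_mem_inv.2 ha₂)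
      b₂⁻¹ (inv_mem_inv.2 hb₂) (by rw [← mul_inv_rev, ← mul_inv_rev, heq])
    simpa [and_comm] using this
  · intro hd a₁ ha₁ b₁ hb₁ a₂ ha₂ b₂ hb₂ heq
    have := hd b₁⁻¹ hb₁ a₁⁻¹ ha₁ b₂⁻¹ hb₂ a₂⁻¹ ha₂ (by rw [← mul_inv_rev, ← mul_inv_rev, heq])
    simpa [and_comm] using this

theorem isLeftSubfactor_iff_isRightSubfactor_inv :
    IsLeftSubfactor A B ↔ IsRightSubfactor A⁻¹ B⁻¹ := by
  rw [IsLeftSubfactor, IsRightSubfactor, isDirectProd_inv_inv]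
  refine and_congr_right fun _ => (Equiv.inv (Set G)).forall_congr fun {B'} => ?_
  simp only [Equiv.inv_apply, inv_subset_inv, isDirectProd_inv_inv, inv_inj]

theorem setOf_isLeftSubfactor_mk_eq :
    {c | ∃ B : Set G, IsLeftSubfactor A B ∧ c = #B} =
      {c | ∃ B : Set G, IsRightSubfactor A⁻¹ B ∧ c = #B} := by
  ext c
  constructor
  · rintro ⟨B, hB, rfl⟩
    exact ⟨B⁻¹, isLeftSubfactor_iff_isRightSubfactor_inv.1 hB, (Cardinal.mk_inv B).symm⟩
  · rintro ⟨B, hB, rfl⟩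
    refine ⟨B⁻¹, isLeftSubfactor_iff_isRightSubfactor_inv.2 (by rwa [inv_inv]),
      (Cardinal.mk_inv B).symm⟩

theorem lUpperIndex_eq_rUpperIndex_inv (A : Set G) : lUpperIndex A = rUpperIndex A⁻¹ :=
  congrArg sSup setOf_isLeftSubfactor_mk_eq

theorem lLowerIndex_eq_rLowerIndex_inv (A : Set G) : lLowerIndex A = rLowerIndex A⁻¹ :=
  congrArg sInf setOf_isLeftSubfactor_mk_eq

theorem isIndexStableWith_of_inv_eq {κ : Cardinal} (hA : A⁻¹ = A)
    (hex : ∃ B, IsRightSubfactor A B) (hcard : ∀ B, IsRightSubfactor A B → #B = κ) :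
    IsIndexStableWith A κ := by
  have hS : {c | ∃ B : Set G, IsRightSubfactor A B ∧ c = #B} = {κ} := by
    refine eq_singleton_iff_unique_mem.2 ⟨?_, ?_⟩
    · obtain ⟨B, hB⟩ := hex
      exact ⟨B, hB, (hcard B hB).symm⟩
    · rintro c ⟨B, hB, rfl⟩
      exact hcard B hB
  have hU : rUpperIndex A = κ := by rw [rUpperIndex, hS, csSup_singleton]
  have hL : rLowerIndex A = κ := by rw [rLowerIndex, hS, csInf_singleton]
  exact ⟨hU, hL, by rwa [lUpperIndex_eq_rUpperIndex_inv, hA],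
    by rwa [lLowerIndex_eq_rLowerIndex_inv, hA]⟩

theorem isRightSubfactor_empty_iff : IsRightSubfactor (∅ : Set G) B ↔ B = univ := by
  have hd : ∀ B' : Set G, IsDirectProd ∅ B' := fun _ _ ha => ha.elim
  refine ⟨fun hB => (hB.2 univ (subset_univ B) (hd univ)).symm, ?_⟩
  rintro rfl
  exact ⟨hd univ, fun B' hsub _ => eq_univ_of_univ_subset hsub⟩

theorem isIndexStableWith_empty : IsIndexStableWith (∅ : Set G) #G :=
  isIndexStableWith_of_inv_eq inv_empty ⟨univ, isRightSubfactor_empty_iff.2 rfl⟩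
    fun B hB => by rw [isRightSubfactor_empty_iff.1 hB, Cardinal.mk_univ]

theorem isRightSubfactor_iff_eq_singleton (h : A⁻¹ * A = univ) :
    IsRightSubfactor A B ↔ ∃ x, B = {x} := by
  have hd : ∀ B' : Set G, IsDirectProd A B' ↔ B'.Subsingleton := fun B' => by
    simp only [isDirectProd_iff_mul_inv_mem, h, mem_univ, forall_const]
    rfl
  simp only [IsRightSubfactor, hd]
  constructor
  · rintro ⟨hs, hmax⟩
    obtain rfl | ⟨x, hx⟩ := B.eq_empty_or_nonempty
    · exact absurd (hmax {1} (empty_subset _) subsingleton_singleton) (singleton_ne_empty 1)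
    · exact ⟨x, hs.eq_singleton_of_mem hx⟩
  · rintro ⟨x, rfl⟩
    exact ⟨subsingleton_singleton,
      fun B' hsub hs => hs.eq_singleton_of_mem (singleton_subset_iff.1 hsub)⟩

theorem isIndexStableWith_of_inv_mul_eq_univ (hA : A⁻¹ = A) (h : A⁻¹ * A = univ) :
    IsIndexStableWith A 1 :=
  isIndexStableWith_of_inv_eq hA ⟨{1}, (isRightSubfactor_iff_eq_singleton h).2 ⟨1, rfl⟩⟩
    fun B hB => by
      obtain ⟨x, rfl⟩ := (isRightSubfactor_iff_eq_singleton h).1 hB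
      exact Cardinal.mk_singleton x

-- `b ↦ b⁻¹ K` matches the right cosets `K b` with the left cosets, so a set meeting every right
-- coset at most once is one on which this map is injective.
theorem isDirectProd_iff_injOn_of_inv_mul_eq {K : Subgroup G} (hK : A⁻¹ * A = K) :
    IsDirectProd A B ↔ InjOn (fun b : G => ((b⁻¹ : G) : G ⧸ K)) B := by
  simp only [isDirectProd_iff_mul_inv_mem, hK, SetLike.mem_coe, InjOn, QuotientGroup.eq, inv_inv]

theorem isIndexStableWith_of_inv_mul_eq {K : Subgroup G} (hA : A⁻¹ = A) (hK : A⁻¹ * A = K) :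
    IsIndexStableWith A #(G ⧸ K) := by
  set f : G → G ⧸ K := fun b => ((b⁻¹ : G) : G ⧸ K)
  have hf : f.Surjective := QuotientGroup.mk_surjective.comp inv_surjective
  have hsub : ∀ B, IsRightSubfactor A B ↔
      InjOn f B ∧ ∀ B', B ⊆ B' → InjOn f B' → B' = B := fun B => by
    simp only [IsRightSubfactor, isDirectProd_iff_injOn_of_inv_mul_eq hK, f]
  refine isIndexStableWith_of_inv_eq hA ?_ fun B hB => ?_
  · simpa only [hsub] using hf.exists_maximal_injOn
  · exact Cardinal.mk_eq_of_maximal_injOn hf ((hsub B).1 hB).1 ((hsub B).1 hB).2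

end Subfactors

section Complement

variable {G : Type*} [Group G] (H : Subgroup G)

theorem inv_compl_coe : ((H : Set G)ᶜ)⁻¹ = (H : Set G)ᶜ := by
  rw [compl_inv, inv_coe_set]

theorem mem_compl_mul_compl_iff {g : G} :
    g ∈ (H : Set G)ᶜ * (H : Set G)ᶜ ↔ ∃ q : G ⧸ H, q ≠ ((1 : G) : G ⧸ H) ∧ q ≠ g := by
  rw [QuotientGroup.mk_surjective.exists]
  simp only [ne_eq, QuotientGroup.eq, mul_one, mem_mul, mem_compl_iff, SetLike.mem_coe]
  constructor
  · rintro ⟨a, ha, b, hb, rfl⟩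
    exact ⟨a, by simpa using ha, by simpa using hb⟩
  · rintro ⟨a, ha, hb⟩
    exact ⟨a, by simpa using ha, a⁻¹ * g, hb, mul_inv_cancel_left a g⟩

theorem compl_mul_compl_of_index_eq_two (h : #(G ⧸ H) = 2) :
    (H : Set G)ᶜ * (H : Set G)ᶜ = H := by
  ext g
  rw [mem_compl_mul_compl_iff, Cardinal.exists_ne_ne_iff_of_mk_eq_two h, eq_comm,
    QuotientGroup.eq, mul_one, SetLike.mem_coe, inv_mem_iff]

theorem compl_mul_compl_of_two_lt_index (h : 2 < #(G ⧸ H)) :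
    (H : Set G)ᶜ * (H : Set G)ᶜ = univ :=
  eq_univ_of_forall fun g => (mem_compl_mul_compl_iff H).2 <|
    Cardinal.exists_ne_ne_of_three_le (by exact_mod_cast Order.succ_le_of_lt h) _ _

end Complement

theorem stmt2 {G : Type*} [Group G] (H : Subgroup G) :
    (H = ⊤ → (H : Set G)ᶜ * (H : Set G)ᶜ = ∅) ∧
    (Cardinal.mk (G ⧸ H) = 2 → (H : Set G)ᶜ * (H : Set G)ᶜ = (H : Set G)) ∧
    (2 < Cardinal.mk (G ⧸ H) → (H : Set G)ᶜ * (H : Set G)ᶜ = Set.univ) ∧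
    (H = ⊤ → IsIndexStableWith ((H : Set G)ᶜ) (Cardinal.mk G)) ∧
    (Cardinal.mk (G ⧸ H) = 2 → IsIndexStableWith ((H : Set G)ᶜ) 2) ∧
    (2 < Cardinal.mk (G ⧸ H) → IsIndexStableWith ((H : Set G)ᶜ) 1) := by
  have hA := inv_compl_coe H
  refine ⟨fun hH => by simp [hH], compl_mul_compl_of_index_eq_two H,
    compl_mul_compl_of_two_lt_index H, ?_, fun h => ?_, fun h => ?_⟩
  · rintro rfl
    simpa using isIndexStableWith_empty (G := G)
  · rw [← h]
    exact isIndexStableWith_of_inv_mul_eq hA (by rw [hA, compl_mul_compl_of_index_eq_two H h])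
  · exact isIndexStableWith_of_inv_mul_eq_univ hA (by rw [hA, compl_mul_compl_of_two_lt_index H h])
end

section
/- Let G be a group, H a subgroup of G, and A ⊆ H. Then, as cardinals, |G:A|⁻ = [G:H]·|H:A|⁻ and |G:A|⁺ = [G:H]·|H:A|⁺, where [G:H] is the index of H in G and |H:A|^± are the right subindices of A computed with H as the ambient group. In particular, for every subset A of G one has |G:A|⁻ = [G:⟨A⟩]·|⟨A⟩:A|⁻ and |G:A|⁺ = [G:⟨A⟩]·|⟨A⟩:A|⁺. -/
open Pointwise

/-- `B` is a right subfactor of the subgroup `H` relative to `A ⊆ H`: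
`B` is a subset of `H` maximal among subsets of `H` with `A * B` direct. -/
def IsRightSubfactorIn {G : Type*} [Group G] (H : Subgroup G) (A B : Set G) : Prop :=
  B ⊆ (H : Set G) ∧ IsDirectProd A B ∧
    ∀ B' : Set G, B' ⊆ (H : Set G) → B ⊆ B' → IsDirectProd A B' → B' = B

/-- The right upper subindex `|H:A|⁺` computed with `H` as ambient group. -/
noncomputable def rUpperIndexIn {G : Type*} [Group G] (H : Subgroup G) (A : Set G) : Cardinal :=
  sSup {c | ∃ B : Set G, IsRightSubfactorIn H A B ∧ c = Cardinal.mk ↥B}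

/-- The right lower subindex `|H:A|⁻` computed with `H` as ambient group. -/
noncomputable def rLowerIndexIn {G : Type*} [Group G] (H : Subgroup G) (A : Set G) : Cardinal :=
  sInf {c | ∃ B : Set G, IsRightSubfactorIn H A B ∧ c = Cardinal.mk ↥B}

/-!
Since `A ⊆ H`, a product `a * b` stays in the right coset `H b`, so both the directness of `A * B`
and the maximality of `B` can be decided one right coset at a time. Translating the part of `B`
in the coset `H t` back into `H` by `t⁻¹` identifies the right subfactors of `G` relative to `A`
with the families, indexed by the right cosets of `H`, of right subfactors of `H` relative to `A`.
The sizes of right subfactors of `G` are therefore exactly the sums `∑_q |C_q|`, and the infimum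
and supremum of such sums of `[G:H]` terms are `[G:H]` times those of the `|C|`.
-/

namespace Cardinal

universe u

theorem sInf_image_sum_pi (ι : Type u) {T : Set Cardinal.{u}} (hT : T.Nonempty) :
    sInf (sum '' Set.univ.pi fun _ : ι => T) = #ι * sInf T := by
  rw [← sum_const']
  refine le_antisymm (csInf_le (OrderBot.bddBelow _) ⟨_, fun _ _ => csInf_mem hT, rfl⟩) ?_
  refine le_csInf ⟨_, fun _ => hT.some, fun _ _ => hT.some_mem, rfl⟩ ?_
  rintro _ ⟨f, hf, rfl⟩
  exact sum_le_sum _ _ fun i => csInf_le (OrderBot.bddBelow _) (hf i trivial)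

theorem sSup_image_sum_pi (ι : Type u) {T : Set Cardinal.{u}} (hT : BddAbove T) :
    sSup (sum '' Set.univ.pi fun _ : ι => T) = #ι * sSup T := by
  have hle : ∀ c ∈ sum '' Set.univ.pi (fun _ : ι => T), c ≤ #ι * sSup T := by
    rintro _ ⟨f, hf, rfl⟩
    rw [← sum_const']
    exact sum_le_sum _ _ fun i => le_csSup hT (hf i trivial)
  refine le_antisymm (csSup_le' hle) ?_
  have hT_iSup : sSup T = ⨆ t : T, (t : Cardinal) := by rw [iSup, Subtype.range_coe]
  rw [hT_iSup, Cardinal.mul_ciSup]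
  exact ciSup_le' fun t => le_csSup ⟨_, hle⟩ ⟨fun _ => t, fun _ _ => t.2, sum_const' ι t⟩

end Cardinal

open QuotientGroup

section RightSlices

variable {G : Type*} [Group G] {H : Subgroup G}

theorem rightRel_mk_mul_of_mem {h : G} (hh : h ∈ H) (g : G) :
    (⟦h * g⟧ : Quotient (rightRel H)) = ⟦g⟧ :=
  Quotient.sound <| rightRel_apply.mpr <| by simpa using H.inv_mem hh

theorem rightRel_mk_mul_out {h : G} (hh : h ∈ H) (q : Quotient (rightRel H)) :
    (⟦h * q.out⟧ : Quotient (rightRel H)) = q := by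
  rw [rightRel_mk_mul_of_mem hh, Quotient.out_eq]

theorem mul_inv_out_mk_mem (g : G) : g * (⟦g⟧ : Quotient (rightRel H)).out⁻¹ ∈ H :=
  rightRel_apply.mp (Quotient.mk_out g)

variable (H) in
/-- With `q.out` as the chosen representative `t` of the right coset `q = H t`, this is
`(B ∩ H t) t⁻¹`; `rightGlue` reassembles a set of `G` from such pieces. -/
def rightSlice (B : Set G) (q : Quotient (rightRel H)) : Set G :=
  {h | h ∈ H ∧ h * q.out ∈ B}

variable (H) in
def rightGlue (C : Quotient (rightRel H) → Set G) : Set G :=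
  {g | g * (⟦g⟧ : Quotient (rightRel H)).out⁻¹ ∈ C ⟦g⟧}

theorem rightSlice_subset (B : Set G) (q : Quotient (rightRel H)) :
    rightSlice H B q ⊆ H :=
  fun _ h => h.1

theorem rightGlue_rightSlice (B : Set G) : rightGlue H (rightSlice H B) = B := by
  ext g
  simp [rightGlue, rightSlice, mul_inv_out_mk_mem]

theorem rightSlice_rightGlue {C : Quotient (rightRel H) → Set G} (hC : ∀ q, C q ⊆ H) :
    rightSlice H (rightGlue H C) = C := by
  ext q h
  refine ⟨fun ⟨hh, hmem⟩ => ?_, fun hh => ⟨hC q hh, ?_⟩⟩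
  · simpa [rightGlue, rightRel_mk_mul_out hh] using hmem
  · simpa [rightGlue, rightRel_mk_mul_out (hC q hh)] using hh

variable (H) in
theorem subset_iff_forall_rightSlice_subset {B B' : Set G} :
    B ⊆ B' ↔ ∀ q, rightSlice H B q ⊆ rightSlice H B' q := by
  refine ⟨fun h q x hx => ⟨hx.1, h hx.2⟩, fun h => ?_⟩
  rw [← rightGlue_rightSlice B, ← rightGlue_rightSlice B']
  exact fun g hg => h _ hg

theorem mk_eq_sum_mk_rightSlice (B : Set G) :
    Cardinal.mk B = Cardinal.sum fun q => Cardinal.mk (rightSlice H B q) := by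
  rw [← Cardinal.mk_sigma]
  refine Cardinal.mk_congr
    { toFun := fun b => ⟨⟦b⟧, b * (⟦b⟧ : Quotient (rightRel H)).out⁻¹, mul_inv_out_mk_mem b.1,
        by simp⟩
      invFun := fun x => ⟨x.2 * x.1.out, x.2.2.2⟩
      left_inv := fun b => by simp
      right_inv := fun ⟨q, h, hh, _⟩ => Sigma.subtype_ext (rightRel_mk_mul_out hh q) ?_ }
  simp [rightRel_mk_mul_out hh q]

end RightSlices

section Subfactors

variable {G : Type*} [Group G] {H : Subgroup G} {A : Set G}

theorem isDirectProd_iff_forall_rightSlice (hAH : A ⊆ H) {B : Set G} :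
    IsDirectProd A B ↔ ∀ q, IsDirectProd A (rightSlice H B q) := by
  refine ⟨fun hB q a₁ ha₁ h₁ hh₁ a₂ ha₂ h₂ hh₂ heq => ?_,
    fun hB a₁ ha₁ b₁ hb₁ a₂ ha₂ b₂ hb₂ heq => ?_⟩
  · have := hB a₁ ha₁ _ hh₁.2 a₂ ha₂ _ hh₂.2 (by simp only [← mul_assoc, heq])
    exact ⟨this.1, mul_right_cancel this.2⟩
  · have hq : (⟦b₁⟧ : Quotient (rightRel H)) = ⟦b₂⟧ := by
      have hb₁ : b₁ = (a₁⁻¹ * a₂) * b₂ := by rw [mul_assoc, ← heq, inv_mul_cancel_left]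
      rw [hb₁, rightRel_mk_mul_of_mem (H.mul_mem (H.inv_mem (hAH ha₁)) (hAH ha₂))]
    set q : Quotient (rightRel H) := ⟦b₂⟧
    have hslice : ∀ b ∈ B, ⟦b⟧ = q → b * q.out⁻¹ ∈ rightSlice H B q :=
      fun b hb hbq => ⟨hbq ▸ mul_inv_out_mk_mem b, by simpa⟩
    have := hB q a₁ ha₁ _ (hslice b₁ hb₁ hq) a₂ ha₂ _ (hslice b₂ hb₂ rfl)
      (by simp only [← mul_assoc, heq])
    exact ⟨this.1, mul_right_cancel this.2⟩

theorem isRightSubfactor_iff_forall_rightSlice (hAH : A ⊆ H) {B : Set G} :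
    IsRightSubfactor A B ↔ ∀ q, IsRightSubfactorIn H A (rightSlice H B q) := by
  constructor
  · rintro ⟨hdir, hmax⟩ q
    rw [isDirectProd_iff_forall_rightSlice hAH] at hdir
    refine ⟨rightSlice_subset B q, hdir q, fun C hCH hBC hC => ?_⟩
    classical
    set F := Function.update (rightSlice H B) q C
    have hFH : ∀ q', F q' ⊆ H :=
      Function.forall_update_iff _ (p := fun _ s => s ⊆ (H : Set G)) |>.mpr
        ⟨hCH, fun q' _ => rightSlice_subset B q'⟩
    have hglue : rightGlue H F = B := by
      refine hmax _ ((subset_iff_forall_rightSlice_subset H).mpr ?_)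
        ((isDirectProd_iff_forall_rightSlice hAH).mpr ?_) <;> rw [rightSlice_rightGlue hFH]
      · exact Function.forall_update_iff _ (p := fun q' s => rightSlice H B q' ⊆ s) |>.mpr
          ⟨hBC, fun _ _ => le_rfl⟩
      · exact Function.forall_update_iff _ (p := fun _ s => IsDirectProd A s) |>.mpr
          ⟨hC, fun q' _ => hdir q'⟩
    calc C = F q := by simp [F]
      _ = rightSlice H B q := by rw [← hglue, rightSlice_rightGlue hFH]
  · intro h
    refine ⟨(isDirectProd_iff_forall_rightSlice hAH).mpr fun q => (h q).2.1, fun B' hBB' hB' => ?_⟩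
    rw [isDirectProd_iff_forall_rightSlice hAH] at hB'
    refine ((subset_iff_forall_rightSlice_subset H).mpr fun q => ?_).antisymm hBB'
    exact ((h q).2.2 _ (rightSlice_subset B' q)
      ((subset_iff_forall_rightSlice_subset H).mp hBB' q) (hB' q)).le

end Subfactors

section Subindices

variable {G : Type*} [Group G]

theorem isDirectProd_sUnion {A : Set G} {𝒞 : Set (Set G)} (hchain : IsChain (· ⊆ ·) 𝒞)
    (h𝒞 : ∀ C ∈ 𝒞, IsDirectProd A C) : IsDirectProd A (⋃₀ 𝒞) := by
  rintro a₁ ha₁ b₁ ⟨C₁, hC₁, hb₁⟩ a₂ ha₂ b₂ ⟨C₂, hC₂, hb₂⟩ heq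
  rcases hchain.total hC₁ hC₂ with h | h
  · exact h𝒞 C₂ hC₂ a₁ ha₁ b₁ (h hb₁) a₂ ha₂ b₂ hb₂ heq
  · exact h𝒞 C₁ hC₁ a₁ ha₁ b₁ hb₁ a₂ ha₂ b₂ (h hb₂) heq

theorem exists_isRightSubfactorIn (H : Subgroup G) (A : Set G) :
    ∃ C, IsRightSubfactorIn H A C := by
  obtain ⟨C, ⟨hCH, hC⟩, hmax⟩ := zorn_subset {C : Set G | C ⊆ H ∧ IsDirectProd A C}
    fun 𝒞 h𝒞 hchain => ⟨⋃₀ 𝒞, ⟨Set.sUnion_subset fun C hC => (h𝒞 hC).1,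
      isDirectProd_sUnion hchain fun C hC => (h𝒞 hC).2⟩, fun _ => Set.subset_sUnion_of_mem⟩
  exact ⟨C, hCH, hC, fun C' hC'H hCC' hC' => (hmax ⟨hC'H, hC'⟩ hCC').antisymm hCC'⟩

theorem setOf_mk_isRightSubfactor_eq {H : Subgroup G} {A : Set G} (hAH : A ⊆ H) :
    {c | ∃ B : Set G, IsRightSubfactor A B ∧ c = Cardinal.mk B} =
      Cardinal.sum '' Set.univ.pi fun _ : Quotient (rightRel H) =>
        {c | ∃ C : Set G, IsRightSubfactorIn H A C ∧ c = Cardinal.mk C} := by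
  ext c
  constructor
  · rintro ⟨B, hB, rfl⟩
    exact ⟨fun q => Cardinal.mk (rightSlice H B q),
      fun q _ => ⟨_, (isRightSubfactor_iff_forall_rightSlice hAH).mp hB q, rfl⟩,
      (mk_eq_sum_mk_rightSlice B).symm⟩
  · rintro ⟨f, hf, rfl⟩
    choose C hC hfC using fun q => hf q trivial
    have hslice := rightSlice_rightGlue fun q => (hC q).1
    refine ⟨rightGlue H C, (isRightSubfactor_iff_forall_rightSlice hAH).mpr (by rwa [hslice]), ?_⟩
    rw [mk_eq_sum_mk_rightSlice, hslice, funext hfC]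

theorem mk_rightCosets_eq (H : Subgroup G) :
    Cardinal.mk (Quotient (rightRel H)) = Cardinal.mk (G ⧸ H) :=
  Cardinal.mk_congr (quotientRightRelEquivQuotientLeftRel H)

theorem rLowerIndex_eq_mul_rLowerIndexIn {H : Subgroup G} {A : Set G} (hAH : A ⊆ H) :
    rLowerIndex A = Cardinal.mk (G ⧸ H) * rLowerIndexIn H A := by
  obtain ⟨C, hC⟩ := exists_isRightSubfactorIn H A
  have hne : {c | ∃ C : Set G, IsRightSubfactorIn H A C ∧ c = Cardinal.mk C}.Nonempty :=
    ⟨_, C, hC, rfl⟩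
  rw [rLowerIndex, setOf_mk_isRightSubfactor_eq hAH, Cardinal.sInf_image_sum_pi _ hne,
    mk_rightCosets_eq, rLowerIndexIn]

theorem rUpperIndex_eq_mul_rUpperIndexIn {H : Subgroup G} {A : Set G} (hAH : A ⊆ H) :
    rUpperIndex A = Cardinal.mk (G ⧸ H) * rUpperIndexIn H A := by
  have hbdd : BddAbove {c | ∃ C : Set G, IsRightSubfactorIn H A C ∧ c = Cardinal.mk C} :=
    ⟨Cardinal.mk G, by rintro _ ⟨C, -, rfl⟩; exact Cardinal.mk_set_le C⟩
  rw [rUpperIndex, setOf_mk_isRightSubfactor_eq hAH, Cardinal.sSup_image_sum_pi _ hbdd,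
    mk_rightCosets_eq, rUpperIndexIn]

end Subindices

theorem stmt3 {G : Type*} [Group G] (H : Subgroup G) (A : Set G) (hAH : A ⊆ (H : Set G)) :
    rLowerIndex A = Cardinal.mk (G ⧸ H) * rLowerIndexIn H A ∧
    rUpperIndex A = Cardinal.mk (G ⧸ H) * rUpperIndexIn H A ∧
    (∀ A' : Set G,
      rLowerIndex A' =
        Cardinal.mk (G ⧸ Subgroup.closure A') * rLowerIndexIn (Subgroup.closure A') A' ∧
      rUpperIndex A' =
        Cardinal.mk (G ⧸ Subgroup.closure A') * rUpperIndexIn (Subgroup.closure A') A') :=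
  ⟨rLowerIndex_eq_mul_rLowerIndexIn hAH, rUpperIndex_eq_mul_rUpperIndexIn hAH, fun _ =>
    ⟨rLowerIndex_eq_mul_rLowerIndexIn Subgroup.subset_closure,
      rUpperIndex_eq_mul_rUpperIndexIn Subgroup.subset_closure⟩⟩
end

section
/- Let G be a group, H a subgroup of G, and A ⊆ H. Then the right subfactors of H relative to A are exactly the intersections with H of the right subfactors of G relative to A: SubF_r(H:A) = { 𝓑 ∩ H : 𝓑 ∈ SubF_r(G:A) }. -/
open Pointwise

/-!
A right subfactor `B` of `H` is direct with `A` in `G`, so by Zorn it extends to a right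
subfactor `𝓑` of `G`, and maximality of `B` in `H` forces `𝓑 ∩ H = B`. Conversely, let `𝓑` be a
right subfactor of `G` and `C ⊆ H` with `A * C` direct and `𝓑 ∩ H ⊆ C`. If `a₁ b = a₂ c` with
`b ∈ 𝓑` and `c ∈ C`, then `b = a₁⁻¹ a₂ c ∈ H` because `A ⊆ H`, so `b ∈ C`; hence `A * (𝓑 ∪ C)` is
still direct, and maximality of `𝓑` gives `C ⊆ 𝓑 ∩ H`.
-/

section

universe u

variable {G : Type u} [Group G]

theorem Subgroup.mem_of_mul_eq_mul {H : Subgroup G} {a₁ a₂ b c : G} (ha₁ : a₁ ∈ H)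
    (ha₂ : a₂ ∈ H) (hc : c ∈ H) (h : a₁ * b = a₂ * c) : b ∈ H := by
  rw [eq_inv_mul_of_mul_eq h]
  exact H.mul_mem (H.inv_mem ha₁) (H.mul_mem ha₂ hc)

namespace IsDirectProd

theorem mono {A B C : Set G} (hC : IsDirectProd A C) (hBC : B ⊆ C) : IsDirectProd A B :=
  fun a₁ ha₁ b₁ hb₁ a₂ ha₂ b₂ hb₂ => hC a₁ ha₁ b₁ (hBC hb₁) a₂ ha₂ b₂ (hBC hb₂)

theorem exists_isRightSubfactor_superset_s4 {A B : Set G} (hB : IsDirectProd A B) :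
    ∃ 𝓑, B ⊆ 𝓑 ∧ IsRightSubfactor A 𝓑 := by
  have chain_bound : ∀ c ⊆ {C : Set G | IsDirectProd A C}, IsChain (· ⊆ ·) c → c.Nonempty →
      ∃ ub ∈ {C : Set G | IsDirectProd A C}, ∀ s ∈ c, s ⊆ ub := by
    intro c hc hchain _
    refine ⟨⋃₀ c, ?_, fun s hs => Set.subset_sUnion_of_mem hs⟩
    rintro a₁ ha₁ b₁ ⟨s₁, hs₁, hb₁⟩ a₂ ha₂ b₂ ⟨s₂, hs₂, hb₂⟩ heq
    rcases hchain.total hs₁ hs₂ with h | h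
    · exact hc hs₂ a₁ ha₁ b₁ (h hb₁) a₂ ha₂ b₂ hb₂ heq
    · exact hc hs₁ a₁ ha₁ b₁ hb₁ a₂ ha₂ b₂ (h hb₂) heq
  obtain ⟨𝓑, hB𝓑, h𝓑, hmax⟩ := zorn_subset_nonempty _ chain_bound B hB
  exact ⟨𝓑, hB𝓑, h𝓑, fun C h𝓑C hC => subset_antisymm (hmax hC h𝓑C) h𝓑C⟩

theorem union_of_inter_subset {H : Subgroup G} {A B C : Set G} (hAH : A ⊆ H)
    (hB : IsDirectProd A B) (hC : IsDirectProd A C) (hCH : C ⊆ H) (hBC : B ∩ H ⊆ C) :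
    IsDirectProd A (B ∪ C) := by
  have mem_C : ∀ a₁ ∈ A, ∀ b ∈ B, ∀ a₂ ∈ A, ∀ c ∈ C, a₁ * b = a₂ * c → b ∈ C :=
    fun a₁ ha₁ b hb a₂ ha₂ c hc heq =>
      hBC ⟨hb, H.mem_of_mul_eq_mul (hAH ha₁) (hAH ha₂) (hCH hc) heq⟩
  intro a₁ ha₁ b₁ hb₁ a₂ ha₂ b₂ hb₂ heq
  rcases hb₁ with hb₁ | hb₁ <;> rcases hb₂ with hb₂ | hb₂
  · exact hB a₁ ha₁ b₁ hb₁ a₂ ha₂ b₂ hb₂ heq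
  · exact hC a₁ ha₁ b₁ (mem_C a₁ ha₁ b₁ hb₁ a₂ ha₂ b₂ hb₂ heq) a₂ ha₂ b₂ hb₂ heq
  · exact hC a₁ ha₁ b₁ hb₁ a₂ ha₂ b₂ (mem_C a₂ ha₂ b₂ hb₂ a₁ ha₁ b₁ hb₁ heq.symm) heq
  · exact hC a₁ ha₁ b₁ hb₁ a₂ ha₂ b₂ hb₂ heq

end IsDirectProd

theorem IsRightSubfactorIn.exists_isRightSubfactor_inter_eq {H : Subgroup G} {A B : Set G}
    (hB : IsRightSubfactorIn H A B) : ∃ 𝓑, IsRightSubfactor A 𝓑 ∧ 𝓑 ∩ H = B := by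
  obtain ⟨hBH, hdir, hmax⟩ := hB
  obtain ⟨𝓑, hB𝓑, h𝓑⟩ := hdir.exists_isRightSubfactor_superset_s4
  exact ⟨𝓑, h𝓑, hmax _ Set.inter_subset_right (Set.subset_inter hB𝓑 hBH)
    (h𝓑.1.mono Set.inter_subset_left)⟩

theorem IsRightSubfactor.isRightSubfactorIn_inter {H : Subgroup G} {A 𝓑 : Set G}
    (hAH : A ⊆ H) (h𝓑 : IsRightSubfactor A 𝓑) : IsRightSubfactorIn H A (𝓑 ∩ H) := by
  obtain ⟨hdir, hmax⟩ := h𝓑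
  refine ⟨Set.inter_subset_right, hdir.mono Set.inter_subset_left, fun C hCH h𝓑C hC => ?_⟩
  have h𝓑_eq : 𝓑 ∪ C = 𝓑 :=
    hmax _ Set.subset_union_left (hdir.union_of_inter_subset hAH hC hCH h𝓑C)
  refine subset_antisymm (Set.subset_inter ?_ hCH) h𝓑C
  exact h𝓑_eq ▸ Set.subset_union_right

theorem stmt4 {G : Type*} [Group G] (H : Subgroup G) (A : Set G) (hAH : A ⊆ (H : Set G)) :
    {B : Set G | IsRightSubfactorIn H A B} =
      (fun 𝓑 : Set G => 𝓑 ∩ (H : Set G)) '' {𝓑 : Set G | IsRightSubfactor A 𝓑} := by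
  ext B
  constructor
  · exact fun hB => hB.exists_isRightSubfactor_inter_eq
  · rintro ⟨𝓑, h𝓑, rfl⟩
    exact h𝓑.isRightSubfactorIn_inter hAH
end
end

section
/- Let G be an infinite group and F a subset of G such that 1 ∉ F, F = F⁻¹, and |F| < |G|. Then there exists a subset A of G such that A⁻¹A = G ∖ F. -/
/-!
Well-order `G` in order type the initial ordinal of `|G|` and run through its elements `g`. At stage
`g ∉ F`, with `U` the (fewer than `|G|`) points chosen so far, pick `x` with `x ∉ U F` and
`x g ∉ U F`; this is possible since `|U F| ≤ |U| |F| < |G|`. Adding `x` and `x g` realizes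
`g = x⁻¹ (x g)`, and creates no difference in `F`: the new internal differences are `1`, `g`, `g⁻¹`,
and those with an earlier point `a` avoid `F` because `x, x g ∉ a F` and `F = F⁻¹`.
-/

open Pointwise Cardinal Set

universe u

section

variable {G : Type u} [Group G]

theorem exists_notMem_and_mul_notMem [Infinite G] {S : Set G} (hS : #S < #G) (g : G) :
    ∃ x, x ∉ S ∧ x * g ∉ S := by
  have hpre : #((· * g) ⁻¹' S : Set G) < #G :=
    (mk_preimage_of_injective _ S (mul_left_injective g)).trans_lt hS
  have hunion : #(S ∪ (· * g) ⁻¹' S : Set G) < #G :=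
    (mk_union_le _ _).trans_lt (add_lt_of_lt (aleph0_le_mk G) hS hpre)
  obtain ⟨x, hx⟩ : (S ∪ (· * g) ⁻¹' S)ᶜ.Nonempty := by
    by_contra h
    rw [not_nonempty_iff_eq_empty, compl_empty_iff] at h
    simp [h, mk_univ] at hunion
  exact ⟨x, by simpa [not_or] using hx⟩

noncomputable def avoidingPoint (S : Set G) (g : G) : G :=
  Classical.epsilon fun x => x ∉ S ∧ x * g ∉ S

theorem avoidingPoint_spec [Infinite G] {S : Set G} (hS : #S < #G) (g : G) :
    avoidingPoint S g ∉ S ∧ avoidingPoint S g * g ∉ S :=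
  Classical.epsilon_spec (exists_notMem_and_mul_notMem hS g)

theorem inv_mul_notMem_of_notMem_mul {U F : Set G} {a b : G} (ha : a ∈ U) (hb : b ∉ U * F) :
    a⁻¹ * b ∉ F := fun h => hb ⟨a, ha, a⁻¹ * b, h, mul_inv_cancel_left a b⟩

theorem inv_mul_notMem_of_mem_pair {F : Set G} (h1 : (1 : G) ∉ F)
    (hsym : F⁻¹ = F) {g x a b : G} (hg : g ∉ F) (ha : a ∈ ({x, x * g} : Set G))
    (hb : b ∈ ({x, x * g} : Set G)) : a⁻¹ * b ∉ F := by
  have hginv : g⁻¹ ∉ F := by rwa [← hsym, inv_mem_inv]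
  rcases ha with rfl | rfl <;> rcases hb with rfl | rfl <;> simpa [mul_assoc]

end

namespace LeftDifferenceSet

variable {G ι : Type u} [Group G] [LinearOrder ι] [WellFoundedLT ι]

open Classical in
noncomputable def pairAt (F : Set G) (e : ι → G) : ι → Set G :=
  WellFoundedLT.fix fun i below =>
    if e i ∈ F then ∅ else
      let x := avoidingPoint ((⋃ j : Iio i, below j j.2) * F) (e i)
      {x, x * e i}

def pairsBelow (F : Set G) (e : ι → G) (i : ι) : Set G := ⋃ j : Iio i, pairAt F e j

open Classical in
theorem pairAt_eq (F : Set G) (e : ι → G) (i : ι) :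
    pairAt F e i = if e i ∈ F then ∅ else
      let x := avoidingPoint (pairsBelow F e i * F) (e i)
      {x, x * e i} :=
  WellFoundedLT.fix_eq _ i

theorem mk_pairAt_le_two (F : Set G) (e : ι → G) (i : ι) : #(pairAt F e i) ≤ 2 := by
  rw [pairAt_eq]
  split_ifs
  · simp
  · exact mk_insert_le.trans (by simp [one_add_one_eq_two])

theorem mk_pairsBelow_lt [Infinite G] (F : Set G) (e : ι → G) {i : ι} (hi : #(Iio i) < #G) :
    #(pairsBelow F e i) < #G := by
  have htwo : (2 : Cardinal) < #G := natCast_lt_aleph0.trans_le (aleph0_le_mk G)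
  calc #(pairsBelow F e i)
      ≤ sum fun j : Iio i => #(pairAt F e j) := mk_iUnion_le_sum_mk
    _ ≤ sum fun _ : Iio i => (2 : Cardinal) := sum_le_sum _ _ fun j => mk_pairAt_le_two F e j
    _ = #(Iio i) * 2 := sum_const' _ _
    _ < #G := mul_lt_of_lt (aleph0_le_mk G) hi htwo

variable {F : Set G} {e : ι → G}

theorem pairAt_of_mem {i : ι} (h : e i ∈ F) : pairAt F e i = ∅ := by
  rw [pairAt_eq, if_pos h]

theorem pairAt_of_notMem {i : ι} (h : e i ∉ F) :
    pairAt F e i =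
      {avoidingPoint (pairsBelow F e i * F) (e i),
        avoidingPoint (pairsBelow F e i * F) (e i) * e i} := by
  rw [pairAt_eq, if_neg h]

theorem inv_mul_notMem_of_lt [Infinite G] (hF : #F < #G) {i j : ι} (hi : #(Iio i) < #G)
    (hji : j < i) {a b : G} (ha : a ∈ pairAt F e j) (hb : b ∈ pairAt F e i) : a⁻¹ * b ∉ F := by
  by_cases hei : e i ∈ F
  · simp [pairAt_of_mem hei] at hb
  have hbad : #(pairsBelow F e i * F) < #G :=
    mk_mul_le.trans_lt (mul_lt_of_lt (aleph0_le_mk G) (mk_pairsBelow_lt F e hi) hF)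
  have haU : a ∈ pairsBelow F e i := mem_iUnion.2 ⟨⟨j, hji⟩, ha⟩
  obtain ⟨hx, hxg⟩ := avoidingPoint_spec hbad (e i)
  rw [pairAt_of_notMem hei] at hb
  rcases hb with rfl | rfl
  exacts [inv_mul_notMem_of_notMem_mul haU hx, inv_mul_notMem_of_notMem_mul haU hxg]

theorem inv_mul_notMem_of_mem_iUnion_pairAt [Infinite G] (h1 : (1 : G) ∉ F) (hsym : F⁻¹ = F)
    (hF : #F < #G) (hsmall : ∀ i : ι, #(Iio i) < #G) {a b : G}
    (ha : a ∈ ⋃ i, pairAt F e i) (hb : b ∈ ⋃ i, pairAt F e i) : a⁻¹ * b ∉ F := by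
  obtain ⟨j, ha⟩ := mem_iUnion.1 ha
  obtain ⟨i, hb⟩ := mem_iUnion.1 hb
  rcases lt_trichotomy j i with hji | rfl | hij
  · exact inv_mul_notMem_of_lt hF (hsmall i) hji ha hb
  · by_cases hej : e j ∈ F
    · simp [pairAt_of_mem hej] at ha
    rw [pairAt_of_notMem hej] at ha hb
    exact inv_mul_notMem_of_mem_pair h1 hsym hej ha hb
  · rw [← hsym, ← inv_mem_inv, inv_inv, mul_inv_rev, inv_inv]
    exact inv_mul_notMem_of_lt hF (hsmall j) hij hb ha

theorem mem_inv_mul_iUnion_pairAt (he : Function.Surjective e) {g : G} (hg : g ∉ F) :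
    g ∈ (⋃ i, pairAt F e i)⁻¹ * ⋃ i, pairAt F e i := by
  obtain ⟨i, rfl⟩ := he g
  set x := avoidingPoint (pairsBelow F e i * F) (e i)
  have hpair : pairAt F e i = {x, x * e i} := pairAt_of_notMem hg
  refine ⟨x⁻¹, ?_, x * e i, mem_iUnion.2 ⟨i, by simp [hpair]⟩, inv_mul_cancel_left x (e i)⟩
  rw [mem_inv, inv_inv]
  exact mem_iUnion.2 ⟨i, by simp [hpair]⟩

theorem inv_mul_iUnion_pairAt_eq_compl [Infinite G] (h1 : (1 : G) ∉ F) (hsym : F⁻¹ = F)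
    (hF : #F < #G) (he : Function.Surjective e) (hsmall : ∀ i : ι, #(Iio i) < #G) :
    (⋃ i, pairAt F e i)⁻¹ * ⋃ i, pairAt F e i = Fᶜ := by
  refine Subset.antisymm ?_ fun g hg => mem_inv_mul_iUnion_pairAt he hg
  rintro _ ⟨a, ha, b, hb, rfl⟩
  simpa using inv_mul_notMem_of_mem_iUnion_pairAt h1 hsym hF hsmall (mem_inv.1 ha) hb

end LeftDifferenceSet

theorem stmt7 {G : Type*} [Group G] [Infinite G] (F : Set G)
    (h1 : (1 : G) ∉ F) (hsym : F⁻¹ = F) (hcard : Cardinal.mk ↥F < Cardinal.mk G) :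
    ∃ A : Set G, A⁻¹ * A = Fᶜ := by
  obtain ⟨e⟩ : Nonempty ((#G).ord.ToType ≃ G) := Cardinal.eq.1 (mk_ord_toType #G)
  exact ⟨_, LeftDifferenceSet.inv_mul_iUnion_pairAt_eq_compl h1 hsym hcard e.surjective fun i => by
    simpa using mk_Iio_lt i⟩
end

section
/- Let G be an infinite group, A ⊆ G, and F a finite subset of G such that f⁻¹Af ⊆ A for every f ∈ F and all elements of F commute with each other. Then the following are equivalent: (A∪F)⁻¹(A∪F) is right syndetic in G; A⁻¹A is right syndetic in G; (A∖F)⁻¹(A∖F) is right syndetic in G. -/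
/-!
Let `(A ∪ F)⁻¹ (A ∪ F) K = G` with `K` finite, and pick `a₀ ∈ A`. Of the four pieces of
`(A ∪ F)⁻¹ (A ∪ F)`, the pieces `A⁻¹A`, `A⁻¹F = A⁻¹a₀ · a₀⁻¹F` and `F⁻¹F = a₀⁻¹a₀ · F⁻¹F` lie in
`A⁻¹A L` for a finite `L`, and `F⁻¹A ⊆ A F⁻¹` because `F` normalises `A`. So `G = A⁻¹A L ∪ A Q`
with `L, Q` finite. If `A⁻¹A` were not right syndetic, then for any `γ` some `x` would avoid
`A⁻¹A (L ∪ L γ⁻¹ Q)`, forcing `x = a q` and `a γ = a' q'` with `a, a' ∈ A`, `q, q' ∈ Q`; then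
`γ = a⁻¹ a' q' ∈ A⁻¹A Q` for every `γ`, a contradiction.

For `A \ F`: an element `f⁻¹ a f` of `F` commutes with `f`, hence equals `a`; so `F` also
normalises `A \ F`, and `(A \ F) ∪ F = A ∪ F`.
-/

open Pointwise

/-- A subset `S` of a group `G` is right syndetic if finitely many right
translates of `S` cover `G`, i.e. `S * F' = G` for some finite `F'`. -/
def RightSyndetic {G : Type*} [Group G] (S : Set G) : Prop :=
  ∃ F' : Finset G, S * (F' : Set G) = Set.univ

open Set

section

variable {G : Type*} [Group G]

theorem rightSyndetic_of_finite_of_mul_eq_univ {S T : Set G} (hT : T.Finite)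
    (h : S * T = univ) : RightSyndetic S :=
  ⟨hT.toFinset, by rwa [Finite.coe_toFinset]⟩

theorem RightSyndetic.mono {S T : Set G} (hST : S ⊆ T) (hS : RightSyndetic S) :
    RightSyndetic T := by
  obtain ⟨K, hK⟩ := hS
  exact ⟨K, eq_univ_of_univ_subset (hK ▸ mul_subset_mul_right hST)⟩

theorem RightSyndetic.inv_mul_self_mono {A B : Set G} (hAB : A ⊆ B)
    (hA : RightSyndetic (A⁻¹ * A)) : RightSyndetic (B⁻¹ * B) :=
  hA.mono (mul_subset_mul (inv_subset_inv.2 hAB) hAB)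

theorem RightSyndetic.infinite [Infinite G] {S : Set G} (hS : RightSyndetic S) : S.Infinite := by
  intro hfin
  obtain ⟨K, hK⟩ := hS
  exact infinite_univ (hK ▸ hfin.mul K.finite_toSet)

theorem exists_notMem_mul_of_not_rightSyndetic {S M : Set G} (hS : ¬RightSyndetic S)
    (hM : M.Finite) : ∃ x, x ∉ S * M := by
  by_contra! h
  exact hS (rightSyndetic_of_finite_of_mul_eq_univ hM (eq_univ_of_forall h))

theorem rightSyndetic_inv_mul_self_of_union_eq_univ {A L Q : Set G} (hL : L.Finite)
    (hQ : Q.Finite) (hcover : A⁻¹ * A * L ∪ A * Q = univ) : RightSyndetic (A⁻¹ * A) := by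
  by_contra hA
  refine hA (rightSyndetic_of_finite_of_mul_eq_univ hQ (eq_univ_of_forall fun γ => ?_))
  have mem_of_notMem : ∀ y, y ∉ A⁻¹ * A * L → y ∈ A * Q := fun y hy =>
    (hcover.symm ▸ mem_univ y : y ∈ A⁻¹ * A * L ∪ A * Q).resolve_left hy
  obtain ⟨x, hx⟩ := exists_notMem_mul_of_not_rightSyndetic hA
    (hL.union ((hL.mul (finite_singleton γ⁻¹)).mul hQ))
  obtain ⟨a, ha, q, hq, rfl⟩ :=
    mem_of_notMem x fun h => hx (mul_subset_mul_left subset_union_left h)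
  have haγ : a * γ ∉ A⁻¹ * A * L := by
    rintro ⟨b, hb, l, hl, hbl⟩
    refine hx ⟨b, hb, l * γ⁻¹ * q, Or.inr (mul_mem_mul (mul_mem_mul hl rfl) hq), ?_⟩
    simp only [← mul_assoc, hbl]
    group
  obtain ⟨a', ha', q', hq', haγ_eq⟩ := mem_of_notMem (a * γ) haγ
  refine ⟨a⁻¹ * a', mul_mem_mul (inv_mem_inv.2 ha) ha', q', hq', ?_⟩
  simp only [mul_assoc, haγ_eq]
  group

theorem inv_mul_union_subset {A F : Set G} {a₀ : G} (ha₀ : a₀ ∈ A) :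
    (A ∪ F)⁻¹ * (A ∪ F) ⊆ A⁻¹ * A * ({1} ∪ {a₀⁻¹} * F ∪ F⁻¹ * F) ∪ F⁻¹ * A := by
  rintro _ ⟨u, hu, v, hv, rfl⟩
  rw [union_inv] at hu
  rcases hu with hu | hu <;> rcases hv with hv | hv
  · exact Or.inl ⟨u * v, mul_mem_mul hu hv, 1, Or.inl (Or.inl rfl), mul_one _⟩
  · refine Or.inl ⟨u * a₀, mul_mem_mul hu ha₀, a₀⁻¹ * v, Or.inl (Or.inr ?_), by group⟩
    exact mul_mem_mul rfl hv
  · exact Or.inr (mul_mem_mul hu hv)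
  · refine Or.inl ⟨a₀⁻¹ * a₀, mul_mem_mul (inv_mem_inv.2 ha₀) ha₀, u * v, Or.inr ?_, by group⟩
    exact mul_mem_mul hu hv

theorem inv_mul_subset_mul_inv {A F : Set G} (hconj : ∀ f ∈ F, ∀ a ∈ A, f⁻¹ * a * f ∈ A) :
    F⁻¹ * A ⊆ A * F⁻¹ := by
  rintro _ ⟨f, hf, a, ha, rfl⟩
  exact ⟨f * a * f⁻¹, by simpa using hconj f⁻¹ hf a ha, f, hf, by group⟩

theorem RightSyndetic.of_inv_mul_self_union [Infinite G] {A F : Set G} (hF : F.Finite)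
    (hconj : ∀ f ∈ F, ∀ a ∈ A, f⁻¹ * a * f ∈ A) (h : RightSyndetic ((A ∪ F)⁻¹ * (A ∪ F))) :
    RightSyndetic (A⁻¹ * A) := by
  obtain ⟨a₀, ha₀⟩ : A.Nonempty := by
    refine nonempty_iff_ne_empty.2 fun hA => h.infinite ?_
    rw [hA, empty_union]
    exact hF.inv.mul hF
  obtain ⟨K, hK⟩ := h
  set L : Set G := {1} ∪ {a₀⁻¹} * F ∪ F⁻¹ * F
  have hL : L.Finite :=
    ((finite_singleton 1).union ((finite_singleton _).mul hF)).union (hF.inv.mul hF)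
  refine rightSyndetic_inv_mul_self_of_union_eq_univ (L := L * K) (Q := F⁻¹ * K)
    (hL.mul K.finite_toSet) (hF.inv.mul K.finite_toSet) (eq_univ_of_univ_subset ?_)
  calc (univ : Set G) = (A ∪ F)⁻¹ * (A ∪ F) * K := hK.symm
    _ ⊆ (A⁻¹ * A * L ∪ A * F⁻¹) * K :=
      mul_subset_mul_right ((inv_mul_union_subset ha₀).trans
        (union_subset_union_right _ (inv_mul_subset_mul_inv hconj)))
    _ = A⁻¹ * A * (L * K) ∪ A * (F⁻¹ * K) := by simp only [union_mul, mul_assoc]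

theorem conj_mem_diff_of_commute {A F : Set G} (hconj : ∀ f ∈ F, ∀ a ∈ A, f⁻¹ * a * f ∈ A)
    (hcomm : ∀ f ∈ F, ∀ g ∈ F, f * g = g * f) :
    ∀ f ∈ F, ∀ a ∈ A \ F, f⁻¹ * a * f ∈ A \ F := by
  rintro f hf a ⟨ha, haF⟩
  refine ⟨hconj f hf a ha, fun hmem => haF ?_⟩
  have hfix : a * f = f⁻¹ * a * f * f := by
    rw [← hcomm f hf _ hmem]
    group
  exact mul_right_cancel hfix ▸ hmem

end

theorem stmt8 {G : Type*} [Group G] [Infinite G] (A : Set G) (F : Finset G)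
    (hconj : ∀ f ∈ F, ∀ a ∈ A, f⁻¹ * a * f ∈ A)
    (hcomm : ∀ f ∈ F, ∀ g ∈ F, f * g = g * f) :
    (RightSyndetic ((A ∪ (F : Set G))⁻¹ * (A ∪ (F : Set G))) ↔ RightSyndetic (A⁻¹ * A)) ∧
    (RightSyndetic (A⁻¹ * A) ↔ RightSyndetic ((A \ (F : Set G))⁻¹ * (A \ (F : Set G)))) := by
  refine ⟨⟨RightSyndetic.of_inv_mul_self_union F.finite_toSet hconj,
    RightSyndetic.inv_mul_self_mono subset_union_left⟩, ⟨fun h => ?_,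
    RightSyndetic.inv_mul_self_mono sdiff_subset⟩⟩
  have hunion : RightSyndetic ((A \ F ∪ (F : Set G))⁻¹ * (A \ F ∪ (F : Set G))) := by
    rw [sdiff_union_self]
    exact h.inv_mul_self_mono subset_union_left
  exact hunion.of_inv_mul_self_union F.finite_toSet (conj_mem_diff_of_commute hconj hcomm)
end

section
/- Let n ≥ 0 be an integer and A a subset of the additive group ℤ such that (ℤ ∖ (A−A)) ∪ {0} = {−n, −n+1, …, n−1, n}. Then the subfactors of ℤ relative to A that contain 0 are exactly the integer intervals [−x, y] ∩ ℤ with x, y ≥ 0 and x + y = n; moreover B − B = {−n, …, n} for every such subfactor B. Consequently A is index stable in ℤ with index |ℤ:A| = n + 1. -/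
open Pointwise

/-- The sum `A + B` is direct. -/
def IsDirectSum (A B : Set ℤ) : Prop :=
  ∀ a₁ ∈ A, ∀ b₁ ∈ B, ∀ a₂ ∈ A, ∀ b₂ ∈ B, a₁ + b₁ = a₂ + b₂ → a₁ = a₂ ∧ b₁ = b₂

/-- `B` is a subfactor of `(ℤ,+)` relative to `A`. -/
def IsSubfactor (A B : Set ℤ) : Prop :=
  IsDirectSum A B ∧ ∀ B' : Set ℤ, B ⊆ B' → IsDirectSum A B' → B' = B

/-!
`A + B` is direct exactly when every nonzero difference of `B` avoids `A - A`. Under the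
hypothesis on `A`, this says that `B` has diameter at most `n`, so the subfactors relative to `A`
are the maximal subsets of `ℤ` of diameter at most `n`: the intervals `[c, c + n]`.
-/

lemma isDirectSum_iff_sub_subset {A B : Set ℤ} :
    IsDirectSum A B ↔ B - B ⊆ (A - A)ᶜ ∪ {0} := by
  constructor
  · rintro hD d ⟨b₁, hb₁, b₂, hb₂, rfl⟩
    by_cases hdA : b₁ - b₂ ∈ A - A
    · obtain ⟨a₁, ha₁, a₂, ha₂, had⟩ := Set.mem_sub.1 hdA
      have := hD a₁ ha₁ b₂ hb₂ a₂ ha₂ b₁ hb₁ (by omega)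
      exact Or.inr (by simp only [Set.mem_singleton_iff]; omega)
    · exact Or.inl hdA
  · intro h a₁ ha₁ b₁ hb₁ a₂ ha₂ b₂ hb₂ heq
    rcases h (Set.sub_mem_sub hb₂ hb₁) with hnot | h0
    · exact absurd (Set.mem_sub.2 ⟨a₁, ha₁, a₂, ha₂, by omega⟩) hnot
    · simp only [Set.mem_singleton_iff] at h0
      omega

lemma isSubfactor_iff_maximal {A B : Set ℤ} : IsSubfactor A B ↔ Maximal (IsDirectSum A) B :=
  ⟨fun ⟨hD, hmax⟩ => ⟨hD, fun _ hD' hBB' => (hmax _ hBB' hD').le⟩,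
    fun ⟨hD, hmax⟩ => ⟨hD, fun _ hBB' hD' => (hmax hD' hBB').antisymm hBB'⟩⟩

section Diameter

variable {n : ℕ}

lemma Icc_sub_Icc_self (c : ℤ) :
    Set.Icc c (c + n) - Set.Icc c (c + n) = Set.Icc (-(n : ℤ)) n := by
  ext d
  simp only [Set.mem_sub, Set.mem_Icc]
  constructor
  · rintro ⟨u, hu, v, hv, rfl⟩
    omega
  · rintro ⟨hd₁, hd₂⟩
    rcases le_or_gt 0 d with hd | hd
    · exact ⟨c + d, ⟨by omega, by omega⟩, c, ⟨le_rfl, by omega⟩, by omega⟩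
    · exact ⟨c, ⟨le_rfl, by omega⟩, c - d, ⟨by omega, by omega⟩, by omega⟩

lemma exists_subset_Icc_of_sub_subset {B : Set ℤ} (hB : B.Nonempty)
    (hBn : B - B ⊆ Set.Icc (-(n : ℤ)) n) : ∃ c : ℤ, B ⊆ Set.Icc c (c + n) := by
  obtain ⟨b₀, hb₀⟩ := hB
  have hdiam : ∀ b₁ ∈ B, ∀ b₂ ∈ B, b₁ - b₂ ≤ n := fun b₁ hb₁ b₂ hb₂ =>
    (hBn ⟨b₁, hb₁, b₂, hb₂, rfl⟩).2
  obtain ⟨M, hM, hMmax⟩ := Int.exists_greatest_of_bdd (P := (· ∈ B))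
    ⟨b₀ + n, fun b hb => by have := hdiam b hb b₀ hb₀; omega⟩ ⟨b₀, hb₀⟩
  refine ⟨M - n, fun b hb => ?_⟩
  have := hdiam M hM b hb
  have := hMmax b hb
  constructor <;> omega

lemma subset_Icc_of_Icc_subset {B : Set ℤ} {c : ℤ} (hcB : Set.Icc c (c + n) ⊆ B)
    (hBn : B - B ⊆ Set.Icc (-(n : ℤ)) n) : B ⊆ Set.Icc c (c + n) := by
  intro b hb
  have hc := hBn ⟨b, hb, c, hcB ⟨le_rfl, by omega⟩, rfl⟩
  have hcn := hBn ⟨b, hb, c + n, hcB ⟨by omega, le_rfl⟩, rfl⟩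
  simp only [Set.mem_Icc] at hc hcn ⊢
  omega

lemma maximal_sub_subset_Icc_iff {B : Set ℤ} :
    Maximal (fun B : Set ℤ => B - B ⊆ Set.Icc (-(n : ℤ)) n) B ↔ ∃ c : ℤ, B = Set.Icc c (c + n) := by
  constructor
  · rintro ⟨hBn, hmax⟩
    have hB : B.Nonempty := by
      by_contra hB
      have h0 : ({0} : Set ℤ) - {0} ⊆ Set.Icc (-(n : ℤ)) n := by simp
      exact hB ⟨0, hmax h0 (by simp [Set.not_nonempty_iff_eq_empty.mp hB]) rfl⟩
    obtain ⟨c, hBc⟩ := exists_subset_Icc_of_sub_subset hB hBn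
    exact ⟨c, hBc.antisymm (hmax (Icc_sub_Icc_self c).le hBc)⟩
  · rintro ⟨c, rfl⟩
    exact ⟨(Icc_sub_Icc_self c).le, fun _ hBn hcB => subset_Icc_of_Icc_subset hcB hBn⟩

lemma mk_Icc_add (c : ℤ) : Cardinal.mk (Set.Icc c (c + n)) = n + 1 := by
  rw [Cardinal.mk_fintype, Fintype.card_ofFinset, Int.card_Icc,
    show c + n + 1 - c = ((n + 1 : ℕ) : ℤ) by omega, Int.toNat_natCast]
  push_cast
  rfl

end Diameter

theorem stmt13 (n : ℕ) (A : Set ℤ)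
    (hA : (A - A)ᶜ ∪ {0} = Set.Icc (-(n : ℤ)) (n : ℤ)) :
    ({B : Set ℤ | IsSubfactor A B ∧ (0 : ℤ) ∈ B} =
      {B : Set ℤ | ∃ x y : ℤ, 0 ≤ x ∧ 0 ≤ y ∧ x + y = (n : ℤ) ∧ B = Set.Icc (-x) y}) ∧
    (∀ B : Set ℤ, IsSubfactor A B → (0 : ℤ) ∈ B →
      B - B = Set.Icc (-(n : ℤ)) (n : ℤ)) ∧
    (∀ B : Set ℤ, IsSubfactor A B → Cardinal.mk ↥B = (n : Cardinal) + 1) := by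
  have hsub (B : Set ℤ) : IsSubfactor A B ↔ ∃ c : ℤ, B = Set.Icc c (c + n) := by
    have hdirect : IsDirectSum A = fun B => B - B ⊆ Set.Icc (-(n : ℤ)) n := by
      funext B
      rw [isDirectSum_iff_sub_subset, hA]
    rw [isSubfactor_iff_maximal, hdirect, maximal_sub_subset_Icc_iff]
  refine ⟨?_, fun B hB _ => ?_, fun B hB => ?_⟩
  · ext B
    simp only [Set.mem_ofPred_eq, hsub]
    constructor
    · rintro ⟨⟨c, rfl⟩, h0⟩
      rw [Set.mem_Icc] at h0
      exact ⟨-c, c + n, by omega, by omega, by omega, by rw [neg_neg]⟩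
    · rintro ⟨x, y, hx, hy, hxy, rfl⟩
      exact ⟨⟨-x, by rw [show -x + (n : ℤ) = y by omega]⟩, by rw [Set.mem_Icc]; omega⟩
  · obtain ⟨c, rfl⟩ := (hsub B).1 hB
    exact Icc_sub_Icc_self c
  · obtain ⟨c, rfl⟩ := (hsub B).1 hB
    exact mk_Icc_add c
end

section
/- Let (a_n)_{n≥1} be a strictly increasing sequence of integers such that a_n − 2a_{n−1} → ∞ as n → ∞, and let A = {a_n : n ≥ 1}. Then the difference set A − A has unbounded gaps (for every L there is an interval of L consecutive integers disjoint from A − A), A − A is not syndetic in ℤ, and A is index stable in ℤ with index ℵ₀; in particular, every subfactor of ℤ relative to A is countably infinite. -/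
open Pointwise

/-- A subset `S` of `(ℤ,+)` is syndetic if `S + F = ℤ` for some finite `F`. -/
def Syndetic (S : Set ℤ) : Prop :=
  ∃ F : Finset ℤ, S + (F : Set ℤ) = Set.univ

/-!
Eventually `a (n+1) - a n` exceeds `a n - a 0` by more than any given `L`, so no difference of
elements of `A` falls in the window of length `L` just above `a K - a 0`: `A - A` has arbitrarily
long gaps. A finite set `F` fits inside such a window after a shift, so some `t` has `t - f ∉ A - A`
for all `f ∈ F`. With `F` finite this rules out `A - A + F = ℤ`, and for a finite `B` with `A + B`
direct the point `t` can be added to `B` keeping the sum direct, so subfactors are infinite.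
-/

def HasArbitrarilyLongGaps (S : Set ℤ) : Prop :=
  ∀ L : ℕ, ∃ x : ℤ, ∀ y ∈ Set.Ico x (x + (L : ℤ)), y ∉ S

theorem hasArbitrarilyLongGaps_range_sub_range {a : ℕ → ℤ} (hmono : Monotone a)
    (hlim : Filter.Tendsto (fun n => a (n + 1) - 2 * a n) Filter.atTop Filter.atTop) :
    HasArbitrarilyLongGaps (Set.range a - Set.range a) := by
  intro L
  obtain ⟨K, hK⟩ := (Filter.tendsto_atTop.mp hlim ((L : ℤ) + 1 - a 0)).exists_forall_of_atTop
  refine ⟨a K - a 0 + 1, ?_⟩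
  rintro _ ⟨hlow, hhigh⟩ ⟨_, ⟨p, rfl⟩, _, ⟨q, rfl⟩, rfl⟩
  simp only at hlow hhigh
  have h0K := hmono (Nat.zero_le K)
  rcases le_or_gt p K with hpK | hKp
  · have := hmono hpK
    have := hmono (Nat.zero_le q)
    omega
  obtain ⟨r, rfl⟩ : ∃ r, p = r + 1 := ⟨p - 1, by omega⟩
  rcases le_or_gt q r with hqr | hrq
  · have := hmono hqr
    have := hmono (show K ≤ r by omega)
    have := hK r (by omega)
    omega
  · have := hmono (show r + 1 ≤ q by omega)
    omega

theorem HasArbitrarilyLongGaps.exists_forall_sub_notMem {S F : Set ℤ}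
    (hS : HasArbitrarilyLongGaps S) (hF : F.Finite) : ∃ t, ∀ f ∈ F, t - f ∉ S := by
  obtain ⟨m, hm⟩ := hF.bddBelow
  obtain ⟨M, hM⟩ := hF.bddAbove
  obtain ⟨x, hx⟩ := hS ((M - m).toNat + 1)
  have hlen : M - m < (((M - m).toNat + 1 : ℕ) : ℤ) := by
    push_cast
    linarith [Int.self_le_toNat (M - m)]
  refine ⟨x + M, fun f hf => hx _ ⟨?_, ?_⟩⟩
  · linarith [hM hf]
  · linarith [hm hf]

theorem HasArbitrarilyLongGaps.not_syndetic {S : Set ℤ} (hS : HasArbitrarilyLongGaps S) :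
    ¬ Syndetic S := by
  rintro ⟨F, hF⟩
  obtain ⟨t, ht⟩ := hS.exists_forall_sub_notMem F.finite_toSet
  obtain ⟨s, hs, f, hf, rfl⟩ : t ∈ S + (F : Set ℤ) := hF ▸ Set.mem_univ t
  exact ht f hf (by simpa using hs)

theorem IsDirectSum.insert {A B : Set ℤ} {t : ℤ} (hAB : IsDirectSum A B)
    (ht : ∀ b ∈ B, t - b ∉ A - A) : IsDirectSum A (insert t B) := by
  have key : ∀ a₁ ∈ A, ∀ a₂ ∈ A, ∀ b ∈ B, a₁ + t ≠ a₂ + b := fun a₁ ha₁ a₂ ha₂ b hb h =>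
    ht b hb ⟨a₂, ha₂, a₁, ha₁, show a₂ - a₁ = t - b by omega⟩
  rintro a₁ ha₁ b₁ (rfl | hb₁) a₂ ha₂ b₂ (rfl | hb₂) h
  · exact ⟨by omega, rfl⟩
  · exact absurd h (key a₁ ha₁ a₂ ha₂ b₂ hb₂)
  · exact absurd h.symm (key a₂ ha₂ a₁ ha₁ b₁ hb₁)
  · exact hAB a₁ ha₁ b₁ hb₁ a₂ ha₂ b₂ hb₂ h

theorem IsSubfactor.infinite {A B : Set ℤ} (hA : A.Nonempty)
    (hgaps : HasArbitrarilyLongGaps (A - A)) (hB : IsSubfactor A B) : B.Infinite := by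
  intro hfin
  obtain ⟨t, ht⟩ := hgaps.exists_forall_sub_notMem hfin
  obtain ⟨a, ha⟩ := hA
  have htB : t ∉ B := fun h => ht t h (by simpa using Set.sub_mem_sub ha ha)
  exact htB (hB.2 _ (Set.subset_insert t B) (hB.1.insert ht) ▸ Set.mem_insert t B)

theorem stmt15 (a : ℕ → ℤ) (hmono : StrictMono a)
    (hlim : Filter.Tendsto (fun n => a (n + 1) - 2 * a n) Filter.atTop Filter.atTop) :
    (∀ L : ℕ, ∃ x : ℤ,
      ∀ y ∈ Set.Ico x (x + (L : ℤ)), y ∉ Set.range a - Set.range a) ∧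
    ¬ Syndetic (Set.range a - Set.range a) ∧
    (∀ B : Set ℤ, IsSubfactor (Set.range a) B → Cardinal.mk ↥B = Cardinal.aleph0) := by
  have hgaps := hasArbitrarilyLongGaps_range_sub_range hmono.monotone hlim
  refine ⟨hgaps, hgaps.not_syndetic, fun B hB => ?_⟩
  have : Infinite B := (hB.infinite (Set.range_nonempty a) hgaps).to_subtype
  exact Cardinal.mk_eq_aleph0 B
end

section
/- Let ℙ denote the set of prime numbers viewed inside the additive group ℤ, and ℙ_o = ℙ ∖ {2} the set of odd primes. The following assertions are equivalent: (a) every even integer is the difference of two primes (i.e., 2ℤ ⊆ ℙ − ℙ); (b) ℙ is index stable in ℤ with index |ℤ:ℙ| = 2; (c) ℙ_o is index stable in ℤ with index |ℤ:ℙ_o| = 2; (d) for all distinct nonzero integers a, b, at least one of a, b, a − b belongs to ℙ − ℙ; (e) whenever a, b are integers neither of which belongs to ℙ − ℙ, then a + b ∈ ℙ − ℙ; (f) |ℤ:ℙ|⁺ = 2; (g) |ℤ:ℙ_o|⁺ = 2. -/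
open Pointwise

/-- The upper subindex `|ℤ:A|⁺`. -/
noncomputable def upperIndex (A : Set ℤ) : Cardinal :=
  sSup {c | ∃ B : Set ℤ, IsSubfactor A B ∧ c = Cardinal.mk ↥B}

/-- The set of prime numbers inside `ℤ`. -/
def Primes : Set ℤ := {x : ℤ | ∃ p : ℕ, p.Prime ∧ x = (p : ℤ)}

/-- The set of odd primes inside `ℤ`. -/
def OddPrimes : Set ℤ := Primes \ {2}

/-!
Write `D = ℙ - ℙ`. An odd element of `D` has the form `p - 2` or `2 - p`, so an odd `x` lies
outside `D` as soon as neither `x + 2` nor `2 - x` is prime; this gives `7 ∉ D`, and a suitable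
choice writes every even integer as a sum of two odd integers outside `D`.

If `2ℤ ⊆ D`, distinct elements of a subfactor differ by odd integers, so it has at most two
elements, and maximality together with `7 ∉ D` (resp. `1 ∉ ℙₒ - ℙₒ`) forces exactly two; (d) and
(e) hold because every integer outside `D` is then odd. Conversely, an even `n ∉ D`, written as
`n = a + b` with `a, b ∉ D` (for `ℙₒ`: `a = 1`), makes `{0, n, a}` direct, and a subfactor
containing it has at least three elements.
-/

section Subfactor

variable {A B : Set ℤ}

theorem neg_mem_sub_self {x : ℤ} (hx : x ∈ A - A) : -x ∈ A - A := by
  obtain ⟨a₁, ha₁, a₂, ha₂, rfl⟩ := hx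
  exact ⟨a₂, ha₂, a₁, ha₁, by ring⟩

theorem isDirectSum_iff_sub_mem :
    IsDirectSum A B ↔ ∀ b₁ ∈ B, ∀ b₂ ∈ B, b₁ - b₂ ∈ A - A → b₁ = b₂ := by
  constructor
  · rintro h b₁ hb₁ b₂ hb₂ ⟨a₁, ha₁, a₂, ha₂, hs⟩
    exact (h a₁ ha₁ b₂ hb₂ a₂ ha₂ b₁ hb₁ (by linarith)).2.symm
  · intro h a₁ ha₁ b₁ hb₁ a₂ ha₂ b₂ hb₂ hs
    have hb : b₂ = b₁ := h b₂ hb₂ b₁ hb₁ ⟨a₁, ha₁, a₂, ha₂, by linarith⟩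
    exact ⟨by linarith, hb.symm⟩

theorem IsDirectSum.mono {B' : Set ℤ} (h : IsDirectSum A B') (hB : B ⊆ B') : IsDirectSum A B :=
  fun a₁ ha₁ b₁ hb₁ a₂ ha₂ b₂ hb₂ ↦ h a₁ ha₁ b₁ (hB hb₁) a₂ ha₂ b₂ (hB hb₂)

theorem isDirectSum_singleton (x : ℤ) : IsDirectSum A {x} :=
  isDirectSum_iff_sub_mem.2 fun _ hb₁ _ hb₂ _ ↦ hb₁.trans hb₂.symm

theorem isDirectSum_pair {x y : ℤ} (h : y - x ∉ A - A) : IsDirectSum A {x, y} := by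
  refine isDirectSum_iff_sub_mem.2 fun b₁ hb₁ b₂ hb₂ hmem ↦ ?_
  rcases hb₁ with rfl | rfl <;> rcases hb₂ with rfl | rfl
  · rfl
  · exact absurd (by simpa using neg_mem_sub_self hmem) h
  · exact absurd hmem h
  · rfl

theorem exists_isSubfactor_superset (h : IsDirectSum A B) : ∃ B', B ⊆ B' ∧ IsSubfactor A B' := by
  have hchain : ∀ c ⊆ {B | IsDirectSum A B}, IsChain (· ⊆ ·) c → c.Nonempty →
      ∃ ub ∈ {B | IsDirectSum A B}, ∀ s ∈ c, s ⊆ ub := by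
    refine fun c hc hchain _ ↦ ⟨⋃₀ c, ?_, fun s hs ↦ Set.subset_sUnion_of_mem hs⟩
    rintro a₁ ha₁ b₁ ⟨s₁, hs₁, hb₁⟩ a₂ ha₂ b₂ ⟨s₂, hs₂, hb₂⟩
    rcases hchain.total hs₁ hs₂ with hs | hs
    · exact hc hs₂ a₁ ha₁ b₁ (hs hb₁) a₂ ha₂ b₂ hb₂
    · exact hc hs₁ a₁ ha₁ b₁ hb₁ a₂ ha₂ b₂ (hs hb₂)
  obtain ⟨B', hBB', hmax⟩ := zorn_subset_nonempty {B | IsDirectSum A B} hchain B h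
  exact ⟨B', hBB', hmax.prop, fun B'' hB'' hdir ↦ (hmax.eq_of_subset hdir hB'').symm⟩

theorem IsSubfactor.nonempty (hB : IsSubfactor A B) : B.Nonempty := by
  by_contra hempty
  rw [Set.not_nonempty_iff_eq_empty] at hempty
  subst hempty
  exact Set.singleton_ne_empty 0 (hB.2 {0} (Set.empty_subset _) (isDirectSum_singleton 0))

theorem IsSubfactor.mem_of_isDirectSum_insert {x : ℤ} (hB : IsSubfactor A B)
    (h : IsDirectSum A (insert x B)) : x ∈ B :=
  hB.2 _ (Set.subset_insert x B) h ▸ Set.mem_insert x B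

theorem IsSubfactor.mk_eq_two (hB : IsSubfactor A B)
    (heven : ∀ n : ℤ, Even n → n ≠ 0 → n ∈ A - A) {t : ℤ} (ht : Odd t) (htA : t ∉ A - A) :
    Cardinal.mk B = 2 := by
  have hodd : ∀ u ∈ B, ∀ v ∈ B, u ≠ v → Odd (u - v) := fun u hu v hv huv ↦
    Int.not_even_iff_odd.1 fun he ↦
      huv (isDirectSum_iff_sub_mem.1 hB.1 u hu v hv (heven _ he (sub_ne_zero.2 huv)))
  obtain ⟨x, hx⟩ := hB.nonempty
  obtain ⟨y, hy, hyx⟩ : ∃ y ∈ B, y ≠ x := by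
    by_contra! hsingle
    have hsub : insert (x + t) B ⊆ {x, x + t} := by
      rintro z (rfl | hz)
      · exact Or.inr rfl
      · exact Or.inl (hsingle z hz)
    have hmem := hB.mem_of_isDirectSum_insert
      ((isDirectSum_pair (by rwa [add_sub_cancel_left])).mono hsub)
    obtain ⟨k, rfl⟩ := ht
    have := hsingle _ hmem
    omega
  have hBxy : B = {y, x} := by
    refine Set.Subset.antisymm (fun z hz ↦ ?_) (Set.insert_subset hy (Set.singleton_subset_iff.2 hx))
    by_contra! hzxy
    simp only [Set.mem_insert_iff, Set.mem_singleton_iff, not_or] at hzxy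
    have := (hodd z hz x hx hzxy.2).sub_odd (hodd z hz y hy hzxy.1)
    rw [sub_sub_sub_cancel_left] at this
    exact Int.not_even_iff_odd.2 (hodd y hy x hx hyx) this
  rw [hBxy, Cardinal.mk_insert (by simpa using hyx), Cardinal.mk_singleton, one_add_one_eq_two]

theorem exists_isSubfactor_three_le_mk (hA : A.Nonempty) {n a : ℤ} (hn : n ∉ A - A)
    (ha : a ∉ A - A) (hna : n - a ∉ A - A) : ∃ B, IsSubfactor A B ∧ 3 ≤ Cardinal.mk B := by
  obtain ⟨a₀, ha₀⟩ := hA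
  have hzero : (0 : ℤ) ∈ A - A := ⟨a₀, ha₀, a₀, ha₀, sub_self a₀⟩
  have hdir : IsDirectSum A {0, n, a} := by
    refine isDirectSum_iff_sub_mem.2 fun b₁ hb₁ b₂ hb₂ hmem ↦ ?_
    -- each off-diagonal difference is `±n`, `±a` or `±(n - a)`
    rcases hb₁ with rfl | rfl | rfl <;> rcases hb₂ with rfl | rfl | rfl <;>
      first
      | rfl
      | exact absurd (by simpa using hmem) ‹_›
      | exact absurd (by simpa using neg_mem_sub_self hmem) ‹_›
  obtain ⟨B, hsub, hB⟩ := exists_isSubfactor_superset hdir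
  refine ⟨B, hB, le_trans ?_ (Cardinal.mk_le_mk_of_subset hsub)⟩
  have hn0 : n ≠ 0 := fun h ↦ hn (h ▸ hzero)
  have ha0 : a ≠ 0 := fun h ↦ ha (h ▸ hzero)
  have hna0 : n ≠ a := fun h ↦ hna ((sub_eq_zero.2 h) ▸ hzero)
  rw [Cardinal.mk_insert (by simp [hn0.symm, ha0.symm]), Cardinal.mk_insert (by simpa using hna0),
    Cardinal.mk_singleton]
  norm_num

theorem le_upperIndex (hB : IsSubfactor A B) : Cardinal.mk B ≤ upperIndex A :=
  le_csSup ⟨Cardinal.mk ℤ, by rintro c ⟨B', -, rfl⟩; exact Cardinal.mk_set_le B'⟩ ⟨B, hB, rfl⟩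

theorem upperIndex_eq_of_forall {κ : Cardinal} (h : ∀ B, IsSubfactor A B → Cardinal.mk B = κ) :
    upperIndex A = κ := by
  obtain ⟨B, -, hB⟩ := exists_isSubfactor_superset (isDirectSum_singleton (A := A) 0)
  have : {c | ∃ B : Set ℤ, IsSubfactor A B ∧ c = Cardinal.mk B} = {κ} := by
    ext c
    refine ⟨by rintro ⟨B', hB', rfl⟩; exact h B' hB', fun hc ↦ ⟨B, hB, hc.trans (h B hB).symm⟩⟩
  rw [upperIndex, this, csSup_singleton]

theorem iff_forall_mk_eq_two_and_iff_upperIndex_eq_two {P : Prop}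
    (h₁ : P → ∀ B, IsSubfactor A B → Cardinal.mk B = 2)
    (h₂ : ¬P → ∃ B, IsSubfactor A B ∧ 3 ≤ Cardinal.mk B) :
    (P ↔ ∀ B, IsSubfactor A B → Cardinal.mk B = 2) ∧ (P ↔ upperIndex A = 2) := by
  have h₂' : ¬P → ∃ B, IsSubfactor A B ∧ 2 < Cardinal.mk B := fun hP ↦ by
    obtain ⟨B, hB, h3⟩ := h₂ hP
    exact ⟨B, hB, lt_of_lt_of_le (by norm_num) h3⟩
  refine ⟨⟨h₁, fun h ↦ by_contra fun hP ↦ ?_⟩,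
    ⟨fun hP ↦ upperIndex_eq_of_forall (h₁ hP), fun h ↦ by_contra fun hP ↦ ?_⟩⟩
  · obtain ⟨B, hB, hlt⟩ := h₂' hP
    exact hlt.ne' (h B hB)
  · obtain ⟨B, hB, hlt⟩ := h₂' hP
    exact ((le_upperIndex hB).trans_eq h).not_gt hlt

end Subfactor

section Primes

theorem two_mem_primes : (2 : ℤ) ∈ Primes := ⟨2, Nat.prime_two, rfl⟩

theorem three_mem_oddPrimes : (3 : ℤ) ∈ OddPrimes := ⟨⟨3, Nat.prime_three, rfl⟩, by norm_num⟩

theorem zero_mem_primes_sub : (0 : ℤ) ∈ Primes - Primes :=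
  ⟨2, two_mem_primes, 2, two_mem_primes, sub_self 2⟩

theorem two_le_of_mem_primes {x : ℤ} (hx : x ∈ Primes) : 2 ≤ x := by
  obtain ⟨p, hp, rfl⟩ := hx
  exact_mod_cast hp.two_le

theorem eq_two_or_odd_of_mem_primes {x : ℤ} (hx : x ∈ Primes) : x = 2 ∨ Odd x := by
  obtain ⟨p, hp, rfl⟩ := hx
  rcases hp.eq_two_or_odd' with rfl | h
  · exact Or.inl rfl
  · exact Or.inr (by exact_mod_cast h)

theorem odd_of_mem_oddPrimes {x : ℤ} (hx : x ∈ OddPrimes) : Odd x :=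
  (eq_two_or_odd_of_mem_primes hx.1).resolve_left hx.2

theorem mul_notMem_primes {x y : ℤ} (hx : 1 < x) (hy : 1 < y) : x * y ∉ Primes := by
  rintro ⟨p, hp, hxy⟩
  lift x to ℕ using by omega
  lift y to ℕ using by omega
  have hxy' : x * y = p := by exact_mod_cast hxy
  exact Nat.not_prime_mul (a := x) (b := y) (by omega) (by omega) (hxy' ▸ hp)

theorem even_of_mem_oddPrimes_sub {x : ℤ} (hx : x ∈ OddPrimes - OddPrimes) : Even x := by
  obtain ⟨p, hp, q, hq, rfl⟩ := hx
  exact (odd_of_mem_oddPrimes hp).sub_odd (odd_of_mem_oddPrimes hq)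

theorem mem_oddPrimes_sub_of_even {x : ℤ} (hx : x ∈ Primes - Primes) (heven : Even x)
    (hx0 : x ≠ 0) : x ∈ OddPrimes - OddPrimes := by
  obtain ⟨p, hp, q, hq, rfl⟩ := hx
  refine ⟨p, ⟨hp, fun hp2 ↦ ?_⟩, q, ⟨hq, fun hq2 ↦ ?_⟩, rfl⟩ <;>
    rw [Set.mem_singleton_iff] at * <;> subst_vars
  · rcases eq_two_or_odd_of_mem_primes hq with rfl | hqo
    · exact hx0 (sub_self 2)
    · exact Int.not_even_iff_odd.2 (even_two.sub_odd hqo) heven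
  · rcases eq_two_or_odd_of_mem_primes hp with rfl | hpo
    · exact hx0 (sub_self 2)
    · exact Int.not_even_iff_odd.2 (hpo.sub_even even_two) heven

theorem notMem_oddPrimes_sub_of_odd {x : ℤ} (hx : Odd x) : x ∉ OddPrimes - OddPrimes :=
  fun h ↦ Int.not_even_iff_odd.2 hx (even_of_mem_oddPrimes_sub h)

theorem notMem_primes_sub_of_odd {x : ℤ} (hx : Odd x) (h₁ : x + 2 ∉ Primes) (h₂ : 2 - x ∉ Primes) :
    x ∉ Primes - Primes := by
  rintro ⟨p, hp, q, hq, rfl⟩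
  rcases eq_two_or_odd_of_mem_primes hq with rfl | hqo
  · exact h₁ (by simpa using hp)
  rcases eq_two_or_odd_of_mem_primes hp with rfl | hpo
  · exact h₂ (by simpa using hq)
  exact Int.not_even_iff_odd.2 hx (hpo.sub_odd hqo)

theorem seven_notMem_primes_sub : (7 : ℤ) ∉ Primes - Primes :=
  notMem_primes_sub_of_odd (by decide) (mul_notMem_primes (x := 3) (y := 3) (by norm_num) (by norm_num))
    fun h ↦ by linarith [two_le_of_mem_primes h]


/-- With `k = n + 6|n| + 3` and `l = 2n + 10|n| + 5` one has `n = (2 - 5k) + (3l - 2)`, and both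
summands are odd integers `x` for which `x + 2` and `2 - x` are either composite or less than `2`. -/
theorem exists_add_eq_of_notMem_primes_sub {n : ℤ} (hn : Even n) :
    ∃ a b, a ∉ Primes - Primes ∧ b ∉ Primes - Primes ∧ a + b = n := by
  obtain ⟨m, rfl⟩ := hn
  have habs := abs_nonneg (m + m)
  have hle := le_abs_self (m + m)
  have hneg := neg_abs_le (m + m)
  generalize |m + m| = s at habs hle hneg
  refine ⟨2 - 5 * (m + m + 6 * s + 3), 3 * (2 * (m + m) + 10 * s + 5) - 2, ?_, ?_, by ring⟩
  · refine notMem_primes_sub_of_odd ⟨-5 * m - 15 * s - 7, by ring⟩ (fun h ↦ ?_) ?_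
    · linarith [two_le_of_mem_primes h]
    · rw [sub_sub_cancel]
      exact mul_notMem_primes (by norm_num) (by linarith)
  · refine notMem_primes_sub_of_odd ⟨6 * m + 15 * s + 6, by ring⟩ ?_ (fun h ↦ ?_)
    · rw [sub_add_cancel]
      exact mul_notMem_primes (by norm_num) (by linarith)
    · linarith [two_le_of_mem_primes h]

theorem odd_of_notMem_primes_sub (hGC : ∀ n : ℤ, Even n → n ∈ Primes - Primes) {x : ℤ}
    (hx : x ∉ Primes - Primes) : Odd x :=
  Int.not_even_iff_odd.1 fun h ↦ hx (hGC x h)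

theorem IsSubfactor.mk_eq_two_of_primes (hGC : ∀ n : ℤ, Even n → n ∈ Primes - Primes) {B : Set ℤ}
    (hB : IsSubfactor Primes B) : Cardinal.mk B = 2 :=
  hB.mk_eq_two (fun n hn _ ↦ hGC n hn) (by decide) seven_notMem_primes_sub

theorem IsSubfactor.mk_eq_two_of_oddPrimes (hGC : ∀ n : ℤ, Even n → n ∈ Primes - Primes)
    {B : Set ℤ} (hB : IsSubfactor OddPrimes B) : Cardinal.mk B = 2 :=
  hB.mk_eq_two (fun n hn hn0 ↦ mem_oddPrimes_sub_of_even (hGC n hn) hn hn0) odd_one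
    (notMem_oddPrimes_sub_of_odd odd_one)

theorem exists_isSubfactor_primes_three_le_mk (h : ¬∀ n : ℤ, Even n → n ∈ Primes - Primes) :
    ∃ B, IsSubfactor Primes B ∧ 3 ≤ Cardinal.mk B := by
  push Not at h
  obtain ⟨n, hn, hnD⟩ := h
  obtain ⟨a, b, ha, hb, rfl⟩ := exists_add_eq_of_notMem_primes_sub hn
  exact exists_isSubfactor_three_le_mk ⟨2, two_mem_primes⟩ hnD ha (by rwa [add_sub_cancel_left])

theorem exists_isSubfactor_oddPrimes_three_le_mk (h : ¬∀ n : ℤ, Even n → n ∈ Primes - Primes) :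
    ∃ B, IsSubfactor OddPrimes B ∧ 3 ≤ Cardinal.mk B := by
  push Not at h
  obtain ⟨n, hn, hnD⟩ := h
  have hsub : OddPrimes - OddPrimes ⊆ Primes - Primes := Set.sub_subset_sub Set.sdiff_subset Set.sdiff_subset
  exact exists_isSubfactor_three_le_mk ⟨3, three_mem_oddPrimes⟩ (fun h ↦ hnD (hsub h))
    (notMem_oddPrimes_sub_of_odd odd_one) (notMem_oddPrimes_sub_of_odd (hn.sub_odd odd_one))

theorem forall_even_mem_primes_sub_iff_forall_ne_ne_zero :
    (∀ n : ℤ, Even n → n ∈ Primes - Primes) ↔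
      ∀ a b : ℤ, a ≠ b → a ≠ 0 → b ≠ 0 →
        (a ∈ Primes - Primes ∨ b ∈ Primes - Primes ∨ a - b ∈ Primes - Primes) := by
  refine ⟨fun hGC a b _ _ _ ↦ ?_, fun h n hn ↦ ?_⟩
  · by_contra! hab
    exact hab.2.2 (hGC _ ((odd_of_notMem_primes_sub hGC hab.1).sub_odd
      (odd_of_notMem_primes_sub hGC hab.2.1)))
  · obtain ⟨a, b, ha, hb, rfl⟩ := exists_add_eq_of_notMem_primes_sub hn
    by_cases hab : a = -b
    · simpa [hab] using zero_mem_primes_sub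
    have hnz {x : ℤ} (hx : x ∉ Primes - Primes) : x ≠ 0 := fun h ↦ hx (h ▸ zero_mem_primes_sub)
    rcases h a (-b) hab (hnz ha) (neg_ne_zero.2 (hnz hb)) with h | h | h
    · exact absurd h ha
    · exact absurd (by simpa using neg_mem_sub_self h) hb
    · rwa [sub_neg_eq_add] at h

theorem forall_even_mem_primes_sub_iff_add_mem :
    (∀ n : ℤ, Even n → n ∈ Primes - Primes) ↔
      ∀ a b : ℤ, a ∉ Primes - Primes → b ∉ Primes - Primes → a + b ∈ Primes - Primes := by
  refine ⟨fun hGC a b ha hb ↦ ?_, fun h n hn ↦ ?_⟩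
  · exact hGC _ ((odd_of_notMem_primes_sub hGC ha).add_odd (odd_of_notMem_primes_sub hGC hb))
  · obtain ⟨a, b, ha, hb, rfl⟩ := exists_add_eq_of_notMem_primes_sub hn
    exact h a b ha hb

end Primes

theorem stmt16 :
    ((∀ n : ℤ, Even n → n ∈ Primes - Primes) ↔
      (∀ B : Set ℤ, IsSubfactor Primes B → Cardinal.mk ↥B = 2)) ∧
    ((∀ n : ℤ, Even n → n ∈ Primes - Primes) ↔
      (∀ B : Set ℤ, IsSubfactor OddPrimes B → Cardinal.mk ↥B = 2)) ∧
    ((∀ n : ℤ, Even n → n ∈ Primes - Primes) ↔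
      (∀ a b : ℤ, a ≠ b → a ≠ 0 → b ≠ 0 →
        (a ∈ Primes - Primes ∨ b ∈ Primes - Primes ∨ a - b ∈ Primes - Primes))) ∧
    ((∀ n : ℤ, Even n → n ∈ Primes - Primes) ↔
      (∀ a b : ℤ, a ∉ Primes - Primes → b ∉ Primes - Primes → a + b ∈ Primes - Primes)) ∧
    ((∀ n : ℤ, Even n → n ∈ Primes - Primes) ↔ upperIndex Primes = 2) ∧
    ((∀ n : ℤ, Even n → n ∈ Primes - Primes) ↔ upperIndex OddPrimes = 2) := by
  obtain ⟨hb, hf⟩ := iff_forall_mk_eq_two_and_iff_upperIndex_eq_two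
    (fun hGC _ ↦ IsSubfactor.mk_eq_two_of_primes hGC) exists_isSubfactor_primes_three_le_mk
  obtain ⟨hc, hg⟩ := iff_forall_mk_eq_two_and_iff_upperIndex_eq_two
    (fun hGC _ ↦ IsSubfactor.mk_eq_two_of_oddPrimes hGC) exists_isSubfactor_oddPrimes_three_le_mk
  exact ⟨hb, hc, forall_even_mem_primes_sub_iff_forall_ne_ne_zero,
    forall_even_mem_primes_sub_iff_add_mem, hf, hg⟩
end
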